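/- arXiv:2506.07949 — 7 statements merged into one kernel-verified Lean document; each statement's English description precedes it below -/
import Mathlib

section
/- Suppose 𝔼[(H − G)²/π(X)] < ∞. Then the single-sample active increment is unbiased for the expensive rating, 𝔼[Δ^π] = 𝔼[H], and its variance satisfies Var(Δ^π) = Var(H) − 𝔼[(H − G)²] + 𝔼[(H − G)²/π(X)]. -/
open MeasureTheory ProbabilityTheory

open scoped ENNReal


section Aux

variable {Ω : Type*} {m0 : MeasurableSpace Ω} {μ : Measure Ω} [IsProbabilityMeasure μ]
  {m : MeasurableSpace Ω}

lemma aux_lintegral (hm : m ≤ m0)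
    {p : Ω → ℝ} (hpm : Measurable[m] p) (hp0 : ∀ ω, 0 ≤ p ω) (hp1 : ∀ ω, p ω ≤ 1)
    {ξ : Ω → ℝ} (hξm : Measurable[m0] ξ) (hξ0 : ∀ ω, 0 ≤ ξ ω) (hξ1 : ∀ ω, ξ ω ≤ 1)
    (hcond : μ[ξ|m] =ᵐ[μ] p)
    {f : Ω → ℝ≥0∞} (hfm : Measurable[m] f) :
    ∫⁻ ω, f ω * ENNReal.ofReal (ξ ω) ∂μ = ∫⁻ ω, f ω * ENNReal.ofReal (p ω) ∂μ := by
  have hξm0 : Measurable[m0] fun ω => ENNReal.ofReal (ξ ω) :=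
    ENNReal.measurable_ofReal.comp hξm
  have hpmm : Measurable[m0] p := hpm.mono hm le_rfl
  have hpm0 : Measurable[m0] fun ω => ENNReal.ofReal (p ω) :=
    ENNReal.measurable_ofReal.comp hpmm
  have hfm0 : Measurable[m0] f := hfm.mono hm le_rfl
  have hξint : Integrable ξ μ := by
    refine (integrable_const (1 : ℝ)).mono' hξm.aestronglyMeasurable ?_
    exact Filter.Eventually.of_forall fun ω => by
      rw [Real.norm_eq_abs, abs_of_nonneg (hξ0 ω)]; exact hξ1 ω
  have hpint : Integrable p μ := by
    refine (integrable_const (1 : ℝ)).mono' hpmm.aestronglyMeasurable ?_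
    exact Filter.Eventually.of_forall fun ω => by
      rw [Real.norm_eq_abs, abs_of_nonneg (hp0 ω)]; exact hp1 ω
  set ν₁ : @Measure Ω m0 := μ.withDensity fun ω => ENNReal.ofReal (ξ ω) with hν₁
  set ν₂ : @Measure Ω m0 := μ.withDensity fun ω => ENNReal.ofReal (p ω) with hν₂
  have htrim : ν₁.trim hm = ν₂.trim hm := by
    refine @Measure.ext Ω m _ _ fun s hs => ?_
    rw [trim_measurableSet_eq hm hs, trim_measurableSet_eq hm hs, hν₁, hν₂,
      withDensity_apply _ (hm s hs), withDensity_apply _ (hm s hs)]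
    rw [← ofReal_integral_eq_lintegral_ofReal hξint.restrict
        (Filter.Eventually.of_forall hξ0),
      ← ofReal_integral_eq_lintegral_ofReal hpint.restrict
        (Filter.Eventually.of_forall hp0)]
    congr 1
    rw [← setIntegral_condExp hm hξint hs]
    exact integral_congr_ae (ae_restrict_of_ae hcond)
  calc ∫⁻ ω, f ω * ENNReal.ofReal (ξ ω) ∂μ
      = ∫⁻ ω, f ω ∂ν₁ := by
        rw [hν₁, lintegral_withDensity_eq_lintegral_mul μ hξm0 hfm0]
        simp only [Pi.mul_apply, mul_comm]
    _ = ∫⁻ ω, f ω ∂(ν₁.trim hm) := (lintegral_trim hm hfm).symm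
    _ = ∫⁻ ω, f ω ∂(ν₂.trim hm) := by rw [htrim]
    _ = ∫⁻ ω, f ω ∂ν₂ := lintegral_trim hm hfm
    _ = ∫⁻ ω, f ω * ENNReal.ofReal (p ω) ∂μ := by
        rw [hν₂, lintegral_withDensity_eq_lintegral_mul μ hpm0 hfm0]
        simp only [Pi.mul_apply, mul_comm]

end Aux

section Aux2

variable {Ω : Type*} {m0 : MeasurableSpace Ω} {μ : Measure Ω} [IsProbabilityMeasure μ]
  {m : MeasurableSpace Ω}

lemma aux_nonneg (hm : m ≤ m0)
    {p : Ω → ℝ} (hpm : Measurable[m] p) (hp0 : ∀ ω, 0 ≤ p ω) (hp1 : ∀ ω, p ω ≤ 1)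
    {ξ : Ω → ℝ} (hξm : Measurable[m0] ξ) (hξ0 : ∀ ω, 0 ≤ ξ ω) (hξ1 : ∀ ω, ξ ω ≤ 1)
    (hcond : μ[ξ|m] =ᵐ[μ] p)
    {f : Ω → ℝ} (hfm : Measurable[m] f) (hf0 : ∀ ω, 0 ≤ f ω)
    (hfp : Integrable (fun ω => f ω * p ω) μ) :
    Integrable (fun ω => f ω * ξ ω) μ ∧ ∫ ω, f ω * ξ ω ∂μ = ∫ ω, f ω * p ω ∂μ := by
  have hkey := aux_lintegral (m0 := m0) hm hpm hp0 hp1 hξm hξ0 hξ1 hcond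
    (f := fun ω => ENNReal.ofReal (f ω)) (ENNReal.measurable_ofReal.comp hfm)
  simp only [← ENNReal.ofReal_mul (hf0 _)] at hkey
  have hfξm : Measurable[m0] fun ω => f ω * ξ ω := (hfm.mono hm le_rfl).mul hξm
  have hfξ0 : ∀ ω, 0 ≤ f ω * ξ ω := fun ω => mul_nonneg (hf0 ω) (hξ0 ω)
  have hfp0 : ∀ ω, 0 ≤ f ω * p ω := fun ω => mul_nonneg (hf0 ω) (hp0 ω)
  have hint : Integrable (fun ω => f ω * ξ ω) μ := by
    refine ⟨hfξm.aestronglyMeasurable, ?_⟩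
    rw [hasFiniteIntegral_iff_ofReal (Filter.Eventually.of_forall hfξ0), hkey,
      ← hasFiniteIntegral_iff_ofReal (Filter.Eventually.of_forall hfp0)]
    exact hfp.2
  refine ⟨hint, ?_⟩
  rw [integral_eq_lintegral_of_nonneg_ae (Filter.Eventually.of_forall hfξ0)
      hfξm.aestronglyMeasurable,
    integral_eq_lintegral_of_nonneg_ae (Filter.Eventually.of_forall hfp0)
      hfp.aestronglyMeasurable, hkey]

lemma aux_signed (hm : m ≤ m0)
    {p : Ω → ℝ} (hpm : Measurable[m] p) (hp0 : ∀ ω, 0 ≤ p ω) (hp1 : ∀ ω, p ω ≤ 1)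
    {ξ : Ω → ℝ} (hξm : Measurable[m0] ξ) (hξ0 : ∀ ω, 0 ≤ ξ ω) (hξ1 : ∀ ω, ξ ω ≤ 1)
    (hcond : μ[ξ|m] =ᵐ[μ] p)
    {f : Ω → ℝ} (hfm : Measurable[m] f)
    (hfp : Integrable (fun ω => f ω * p ω) μ) :
    Integrable (fun ω => f ω * ξ ω) μ ∧ ∫ ω, f ω * ξ ω ∂μ = ∫ ω, f ω * p ω ∂μ := by
  have hposm : Measurable[m] fun ω => max (f ω) 0 := hfm.max measurable_const
  have hnegm : Measurable[m] fun ω => max (-f ω) 0 := hfm.neg.max measurable_const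
  have hposeq : (fun ω => max (f ω) 0 * p ω) = fun ω => max (f ω * p ω) 0 :=
    funext fun ω => by rw [max_mul_of_nonneg _ _ (hp0 ω), zero_mul]
  have hnegeq : (fun ω => max (-f ω) 0 * p ω) = fun ω => max (-(f ω * p ω)) 0 :=
    funext fun ω => by rw [max_mul_of_nonneg _ _ (hp0 ω), zero_mul, neg_mul]
  have hIpos : Integrable (fun ω => max (f ω) 0 * p ω) μ := by
    rw [hposeq]; exact hfp.pos_part
  have hIneg : Integrable (fun ω => max (-f ω) 0 * p ω) μ := by
    rw [hnegeq]; exact hfp.neg.pos_part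
  have hpos := aux_nonneg (m0 := m0) hm hpm hp0 hp1 hξm hξ0 hξ1 hcond hposm
    (fun ω => le_max_right _ _) hIpos
  have hneg := aux_nonneg (m0 := m0) hm hpm hp0 hp1 hξm hξ0 hξ1 hcond hnegm
    (fun ω => le_max_right _ _) hIneg
  have hsplit : (fun ω => f ω * ξ ω) =
      fun ω => max (f ω) 0 * ξ ω - max (-f ω) 0 * ξ ω := by
    funext ω
    rw [← sub_mul]
    congr 1
    rcases le_total (f ω) 0 with h | h <;> simp [max_eq_left, max_eq_right, h]
  have hsplitp : (fun ω => f ω * p ω) =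
      fun ω => max (f ω) 0 * p ω - max (-f ω) 0 * p ω := by
    funext ω
    rw [← sub_mul]
    congr 1
    rcases le_total (f ω) 0 with h | h <;> simp [max_eq_left, max_eq_right, h]
  constructor
  · rw [hsplit]; exact hpos.1.sub hneg.1
  · rw [hsplit, hsplitp, integral_sub hpos.1 hneg.1, hpos.2, hneg.2,
      integral_sub hIpos hIneg]

end Aux2

/-- On a probability space, with `X` a random input, `G, H` square-integrable
cheap/expensive ratings, `π : 𝒳 → (0,1]` an annotation policy, and `ξ ∈ {0,1}` conditionally
Bernoulli(`π(X)`) given `(X, G, H)`, if `𝔼[(H−G)²/π(X)] < ∞` then the single-sample active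
increment `Δ^π = G + (H − G)·ξ/π(X)` satisfies `𝔼[Δ^π] = 𝔼[H]` and
`Var(Δ^π) = Var(H) − 𝔼[(H−G)²] + 𝔼[(H−G)²/π(X)]`. -/
theorem stmt_0
    {Ω 𝒳 : Type*} [MeasurableSpace Ω] [MeasurableSpace 𝒳]
    (μ : Measure Ω) [IsProbabilityMeasure μ]
    (X : Ω → 𝒳) (hX : Measurable X)
    (G H : Ω → ℝ) (hGm : Measurable G) (hHm : Measurable H)
    (hG : MemLp G 2 μ) (hH : MemLp H 2 μ)
    (π : 𝒳 → ℝ) (hπm : Measurable π) (hπ : ∀ x, π x ∈ Set.Ioc (0 : ℝ) 1)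
    (ξ : Ω → ℝ) (hξm : Measurable ξ) (hξ01 : ∀ ω, ξ ω = 0 ∨ ξ ω = 1)
    (hcond : μ[ξ | MeasurableSpace.comap (fun ω => (X ω, G ω, H ω)) inferInstance]
      =ᵐ[μ] fun ω => π (X ω))
    (hint : Integrable (fun ω => (H ω - G ω) ^ 2 / π (X ω)) μ) :
    (∫ ω, (G ω + (H ω - G ω) * ξ ω / π (X ω)) ∂μ = ∫ ω, H ω ∂μ) ∧
    variance (fun ω => G ω + (H ω - G ω) * ξ ω / π (X ω)) μ =
      variance H μ - ∫ ω, (H ω - G ω) ^ 2 ∂μ + ∫ ω, (H ω - G ω) ^ 2 / π (X ω) ∂μ := by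
  have hT : Measurable fun ω => (X ω, G ω, H ω) := hX.prodMk (hGm.prodMk hHm)
  set m : MeasurableSpace Ω :=
    MeasurableSpace.comap (fun ω => (X ω, G ω, H ω)) inferInstance with hmdef
  have hm : m ≤ _ := hT.comap_le
  have hTm : Measurable[m] fun ω => (X ω, G ω, H ω) := comap_measurable _
  have hXm' : Measurable[m] X := measurable_fst.comp hTm
  have hGm' : Measurable[m] G := measurable_fst.comp (measurable_snd.comp hTm)
  have hHm' : Measurable[m] H := measurable_snd.comp (measurable_snd.comp hTm)
  have hpm : Measurable[m] fun ω => π (X ω) := hπm.comp hXm'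
  have hp0 : ∀ ω, 0 < π (X ω) := fun ω => (hπ _).1
  have hp0' : ∀ ω, (0:ℝ) ≤ π (X ω) := fun ω => (hp0 ω).le
  have hp1 : ∀ ω, π (X ω) ≤ 1 := fun ω => (hπ _).2
  have hξ0 : ∀ ω, (0:ℝ) ≤ ξ ω := fun ω => by rcases hξ01 ω with h | h <;> simp [h]
  have hξ1 : ∀ ω, ξ ω ≤ 1 := fun ω => by rcases hξ01 ω with h | h <;> simp [h]
  set fΔ : Ω → ℝ := fun ω => (H ω - G ω) / π (X ω) with hfΔdef
  have hfΔm : Measurable[m] fΔ := (hHm'.sub hGm').div hpm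
  have hGi : Integrable G μ := hG.integrable one_le_two
  have hHi : Integrable H μ := hH.integrable one_le_two
  -- first application: f = fΔ
  have hf1eq : (fun ω => fΔ ω * π (X ω)) = fun ω => H ω - G ω :=
    funext fun ω => div_mul_cancel₀ _ (hp0 ω).ne'
  have hf1i : Integrable (fun ω => fΔ ω * π (X ω)) μ := by
    rw [hf1eq]; exact hHi.sub hGi
  obtain ⟨hint1, heq1⟩ := aux_signed hm hpm hp0' hp1 hξm hξ0 hξ1 hcond hfΔm hf1i
  have heqHG : ∫ ω, fΔ ω * ξ ω ∂μ = ∫ ω, H ω ∂μ - ∫ ω, G ω ∂μ := by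
    rw [heq1, hf1eq, integral_sub hHi hGi]
  -- second application: f = fΔ^2
  have hf2m : Measurable[m] fun ω => fΔ ω ^ 2 := hfΔm.pow_const 2
  have hf2eq : (fun ω => fΔ ω ^ 2 * π (X ω)) = fun ω => (H ω - G ω) ^ 2 / π (X ω) :=
    funext fun ω => by
      have h := (hp0 ω).ne'
      rw [div_pow, sq (π (X ω)), ← div_div, div_mul_cancel₀ _ h]
  have hf2i : Integrable (fun ω => fΔ ω ^ 2 * π (X ω)) μ := by rw [hf2eq]; exact hint
  obtain ⟨hint2, heq2⟩ := aux_nonneg hm hpm hp0' hp1 hξm hξ0 hξ1 hcond hf2m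
    (fun ω => sq_nonneg _) hf2i
  -- third application: f = 2*G*fΔ
  have hf3m : Measurable[m] fun ω => 2 * G ω * fΔ ω :=
    (hGm'.const_mul 2).mul hfΔm
  have hf3eq : (fun ω => 2 * G ω * fΔ ω * π (X ω)) =
      fun ω => H ω ^ 2 - G ω ^ 2 - (H ω - G ω) ^ 2 :=
    funext fun ω => by
      have h := (hp0 ω).ne'
      rw [mul_assoc, div_mul_cancel₀ _ h]
      ring
  have hf3i : Integrable (fun ω => 2 * G ω * fΔ ω * π (X ω)) μ := by
    rw [hf3eq]
    exact (hH.integrable_sq.sub hG.integrable_sq).sub (hH.sub hG).integrable_sq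
  obtain ⟨hint3, heq3⟩ := aux_signed hm hpm hp0' hp1 hξm hξ0 hξ1 hcond hf3m hf3i
  -- the increment
  set Δ : Ω → ℝ := fun ω => G ω + fΔ ω * ξ ω with hΔdef
  have hfun : (fun ω => G ω + (H ω - G ω) * ξ ω / π (X ω)) = Δ :=
    funext fun ω => by rw [hΔdef, hfΔdef]; rw [mul_div_right_comm]
  have hΔsm :=
    (hGm.add (((hHm.sub hGm).div (hπm.comp hX)).mul hξm)).aestronglyMeasurable (μ := μ)
  have hΔsq : ∀ ω, Δ ω ^ 2 = G ω ^ 2 + 2 * G ω * fΔ ω * ξ ω + fΔ ω ^ 2 * ξ ω := by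
    intro ω
    have hξ2 : ξ ω * ξ ω = ξ ω := by rcases hξ01 ω with h | h <;> simp [h]
    have : Δ ω ^ 2 = G ω ^ 2 + 2 * G ω * fΔ ω * ξ ω + fΔ ω ^ 2 * (ξ ω * ξ ω) := by
      rw [hΔdef]; ring
    rw [this, hξ2]
  have hIΔsq : Integrable (fun ω => Δ ω ^ 2) μ := by
    simp only [hΔsq]
    exact (hG.integrable_sq.add hint3).add hint2
  have hMem : MemLp Δ 2 μ := (memLp_two_iff_integrable_sq (μ := μ) hΔsm).2 hIΔsq
  have hmean : ∫ ω, Δ ω ∂μ = ∫ ω, H ω ∂μ := by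
    rw [hΔdef]
    rw [integral_add hGi hint1, heqHG]
    ring
  have hEΔsq : ∫ ω, Δ ω ^ 2 ∂μ =
      ∫ ω, H ω ^ 2 ∂μ - ∫ ω, (H ω - G ω) ^ 2 ∂μ + ∫ ω, (H ω - G ω) ^ 2 / π (X ω) ∂μ := by
    simp only [hΔsq]
    have hI3 : Integrable (fun ω => G ω ^ 2 + 2 * G ω * fΔ ω * ξ ω) μ :=
      hG.integrable_sq.add hint3
    rw [integral_add hI3 hint2,
      integral_add hG.integrable_sq hint3, heq3, hf3eq, heq2, hf2eq,
      show ∫ ω, (H ω ^ 2 - G ω ^ 2 - (H ω - G ω) ^ 2) ∂μ =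
        ∫ ω, (H ω ^ 2 - G ω ^ 2) ∂μ - ∫ ω, (H ω - G ω) ^ 2 ∂μ from
        integral_sub (hH.integrable_sq.sub hG.integrable_sq :
          Integrable (fun ω => H ω ^ 2 - G ω ^ 2) μ)
          ((hH.sub hG).integrable_sq : Integrable (fun ω => (H ω - G ω) ^ 2) μ),
      integral_sub hH.integrable_sq hG.integrable_sq]
    ring
  refine ⟨by rw [hfun]; exact hmean, ?_⟩
  rw [hfun, variance_eq_sub hMem, variance_eq_sub hH]
  simp only [Pi.pow_apply]
  rw [hEΔsq, hmean]
  ring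
end

section
/- Assume c_h > c_g > 0 and ℙ(G ≠ H) > 0, and set E = 𝔼[(H − G)²] and V = Var(H). Define f : (0,1] → ℝ by f(p) = (c_h·p + c_g)·(V − E + E/p), which is the budget-normalized mean-squared error of the active estimator using the constant annotation policy π(x) ≡ p run until a budget B is exhausted. Then f attains its minimum over (0,1] at p* = √((c_g/c_h) · E/(V − E)) if E < (c_h/(c_h + c_g))·V, and at p* = 1 otherwise. -/
open MeasureTheory ProbabilityTheory

/-- With `c_h > c_g > 0`, `ℙ(G ≠ H) > 0`, `E = 𝔼[(H − G)²]`, `V = Var(H)`,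
the budget-normalized MSE `f(p) = (c_h·p + c_g)·(V − E + E/p)` of the constant-rate active
estimator attains its minimum over `(0,1]` at
`p* = √((c_g/c_h)·E/(V − E))` if `E < (c_h/(c_h + c_g))·V`, and at `p* = 1` otherwise. -/
theorem stmt_1
    {Ω : Type*} [MeasurableSpace Ω] (μ : Measure Ω) [IsProbabilityMeasure μ]
    (G H : Ω → ℝ) (hGm : Measurable G) (hHm : Measurable H)
    (hG : MemLp G 2 μ) (hH : MemLp H 2 μ)
    (c_h c_g : ℝ) (hc : c_h > c_g) (hcg : c_g > 0)
    (hne : 0 < μ {ω | G ω ≠ H ω})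
    (E V : ℝ) (hE : E = ∫ ω, (H ω - G ω) ^ 2 ∂μ) (hV : V = variance H μ)
    (f : ℝ → ℝ) (hf : ∀ p, f p = (c_h * p + c_g) * (V - E + E / p))
    (pstar : ℝ)
    (hps : pstar = if E < c_h / (c_h + c_g) * V
      then Real.sqrt (c_g / c_h * (E / (V - E))) else 1) :
    pstar ∈ Set.Ioc (0 : ℝ) 1 ∧ ∀ p ∈ Set.Ioc (0 : ℝ) 1, f pstar ≤ f p := by
  have hch : (0:ℝ) < c_h := hcg.trans hc
  have hint : Integrable (fun ω => (H ω - G ω)^2) μ := (hH.sub hG).integrable_sq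
  -- E > 0
  have hEpos : 0 < E := by
    rw [hE, integral_pos_iff_support_of_nonneg (fun ω => sq_nonneg _) hint]
    convert hne using 2
    ext ω
    simp [Function.support, sub_eq_zero, pow_eq_zero_iff, eq_comm]
  by_cases hcase : E < c_h / (c_h + c_g) * V
  · -- interior optimum
    have hsum : (0:ℝ) < c_h + c_g := by linarith
    have hVE : c_h * V > (c_h + c_g) * E := by
      rw [div_mul_eq_mul_div, lt_div_iff₀ hsum] at hcase
      linarith
    have hD : 0 < V - E := by nlinarith
    have harg : 0 ≤ c_g / c_h * (E / (V - E)) := by positivity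
    have hargpos : 0 < c_g / c_h * (E / (V - E)) := by positivity
    rw [hps, if_pos hcase]
    set s := Real.sqrt (c_g / c_h * (E / (V - E))) with hs
    have hspos : 0 < s := Real.sqrt_pos.mpr hargpos
    have hs2 : s ^ 2 = c_g / c_h * (E / (V - E)) := Real.sq_sqrt harg
    have hkey : c_h * (V - E) * s ^ 2 = c_g * E := by
      rw [hs2]; field_simp
    have hsle : s ≤ 1 := by
      have harg1 : c_g / c_h * (E / (V - E)) ≤ 1 := by
        rw [div_mul_div_comm, div_le_one (by positivity)]
        nlinarith
      calc s ≤ Real.sqrt 1 := Real.sqrt_le_sqrt harg1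
        _ = 1 := Real.sqrt_one
    refine ⟨⟨hspos, hsle⟩, fun p hp => ?_⟩
    obtain ⟨hp0, hp1⟩ := hp
    rw [hf, hf, ← sub_nonneg]
    have hid : (c_h * p + c_g) * (V - E + E / p) - (c_h * s + c_g) * (V - E + E / s)
        = c_h * (V - E) * (p - s) ^ 2 / p := by
      field_simp
      nlinarith [hkey, sq_nonneg (p - s), sq_nonneg (p + s)]
    rw [hid]
    positivity
  · -- boundary optimum p* = 1
    have hsum : (0:ℝ) < c_h + c_g := by linarith
    have hVE : c_h * V ≤ (c_h + c_g) * E := by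
      have := not_lt.mp hcase
      rw [div_mul_eq_mul_div] at this
      have := (div_le_iff₀ hsum).mp this
      linarith
    have hkey : c_h * (V - E) ≤ c_g * E := by nlinarith
    rw [hps, if_neg hcase]
    refine ⟨⟨one_pos, le_refl 1⟩, fun p hp => ?_⟩
    obtain ⟨hp0, hp1⟩ := hp
    rw [hf, hf, ← sub_nonneg]
    have hid : (c_h * p + c_g) * (V - E + E / p) - (c_h * 1 + c_g) * (V - E + E / 1)
        = (1 - p) * (c_g * E - c_h * (V - E) * p) / p := by
      field_simp; ring
    rw [hid]
    apply div_nonneg _ hp0.le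
    apply mul_nonneg (by linarith)
    rcases le_or_gt 0 (c_h * (V - E)) with h | h
    · nlinarith
    · nlinarith
end

section
/- Assume c_h > c_g > 0 and ℙ(G ≠ H) > 0. For τ > 0 define γ*(τ) = min( √( (c_g/c_h + ℙ(U > τ²)) / (Var(H) − 𝔼[U·1{U ≤ τ²}]) ), 1/τ ) when Var(H) − 𝔼[U·1{U ≤ τ²}] > 0, and γ*(τ) = 1/τ otherwise; define the scaled and clipped policy π_clip(x; τ) = min(γ*(τ)·√(u(x)), 1), and define g(τ) = (c_h·𝔼[π_clip(X; τ)] + c_g)·(Var(H) + 𝔼[U·(1/π_clip(X; τ) − 1)]). If τ* > 0 minimizes g over (0, ∞), then the policy π_active(x) = π_clip(x; τ*) minimizes J(π) = (c_h·𝔼[π(X)] + c_g)·(Var(H) − 𝔼[(H − G)²] + 𝔼[(H − G)²/π(X)]) over the class Π of all policies π : 𝒳 → (0,1]. -/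
/-- pointwise Lagrange: `min (γ√u) 1` minimizes `p ↦ p/γ² + u/p` over `(0,1]` (with junk at `u=0`). -/
lemma ptwise (γ u p : ℝ) (hγ : 0 < γ) (hu : 0 ≤ u) (hp0 : 0 ≤ p) (hp1 : p ≤ 1)
    (hpos : 0 < p ∨ u = 0) :
    (1/γ^2) * min (γ * Real.sqrt u) 1 + u / min (γ * Real.sqrt u) 1 ≤ (1/γ^2) * p + u / p := by
  set s := Real.sqrt u with hs
  have hs0 : 0 ≤ s := Real.sqrt_nonneg u
  have hus : u = s^2 := (Real.sq_sqrt hu).symm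
  rcases eq_or_lt_of_le hs0 with h0 | hspos
  · -- s = 0, u = 0
    have hu0 : u = 0 := by rw [hus, ← h0]; ring
    simp [hu0, ← h0]
    positivity
  · have hupos : 0 < u := by rw [hus]; positivity
    have hppos : 0 < p := hpos.resolve_right (ne_of_gt hupos)
    rcases le_or_gt (γ * s) 1 with hle | hlt
    · rw [min_eq_left hle]
      have hγs : 0 < γ * s := by positivity
      have key : (1/γ^2) * p + u / p - ((1/γ^2) * (γ*s) + u / (γ*s)) = (p/γ - s)^2 / p := by
        rw [hus]; field_simp; ring
      nlinarith [div_nonneg (sq_nonneg (p/γ - s)) hppos.le]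
    · rw [min_eq_right hlt.le]
      have h1 : 1 < γ * s := hlt
      have key : (1/γ^2) * p + u / p - ((1/γ^2) * 1 + u / 1) = (1-p)*(s^2*γ^2 - p) / (p * γ^2) := by
        rw [hus]; field_simp; ring
      have h3 : 1 < s^2*γ^2 := by nlinarith [sq_nonneg (γ*s - 1)]
      have h2 : 0 ≤ (1-p)*(s^2*γ^2 - p) :=
        mul_nonneg (by linarith) (by linarith)
      nlinarith [div_nonneg h2 (by positivity : (0:ℝ) ≤ p * γ^2)]

/-- product step: if the Lagrangian of `(a',b')` is below that of `(A,B)` at the matched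
multiplier, then the product objective is also below. -/
lemma prodstep (c_h c_g K A B a' b' lam : ℝ)
    (hE : 0 < c_h * A + c_g) (hS : 0 < K + B)
    (hlam : lam * (c_h * A + c_g) = c_h * (K + B))
    (hlin : lam * a' + b' ≤ lam * A + B)
    (hs : 0 ≤ K + b') :
    (c_h * a' + c_g) * (K + b') ≤ (c_h * A + c_g) * (K + B) := by
  set E := c_h * A + c_g with hEdef
  set S := K + B with hSdef
  set s := K + b' with hsdef
  -- multiply hlin by E > 0
  have h1 : c_h * S * a' + E * b' ≤ c_h * S * A + E * B := by
    have := mul_le_mul_of_nonneg_left hlin hE.le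
    calc c_h * S * a' + E * b' = E * (lam * a' + b') := by rw [← hlam]; ring
      _ ≤ E * (lam * A + B) := this
      _ = c_h * S * A + E * B := by rw [← hlam]; ring
  -- deduce S * (c_h a' + c_g) ≤ E * (2S - s)
  have h2 : S * (c_h * a' + c_g) ≤ E * (2*S - s) := by nlinarith
  -- multiply by s ≥ 0 and use (2S - s) s ≤ S²
  have h3 : S * ((c_h * a' + c_g) * s) ≤ E * ((2*S - s) * s) := by nlinarith
  have h4 : (2*S - s) * s ≤ S^2 := by nlinarith [sq_nonneg (S - s)]
  have h5 : S * ((c_h * a' + c_g) * s) ≤ S * (E * S) := by nlinarith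
  have := (mul_le_mul_iff_right₀ hS).mp h5
  nlinarith [this]

/-- unimodality: `x ↦ a x + b / x` with `b = a t²` is minimized at `t` on `(0,∞)`. -/
lemma unimodal (a b t x : ℝ) (ha : 0 ≤ a) (ht : 0 < t) (hx : 0 < x) (hb : b = a * t^2) :
    a * t + b / t ≤ a * x + b / x := by
  have key : a * x + b / x - (a * t + b / t) = a * (x - t)^2 / x := by
    rw [hb]; field_simp; ring
  nlinarith [div_nonneg (mul_nonneg ha (sq_nonneg (x - t))) hx.le]

set_option maxHeartbeats 1000000 in
lemma key_exists {𝒳 : Type*} [Fintype 𝒳]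
    (q u : 𝒳 → ℝ) (hq : ∀ x, 0 < q x) (hu0 : ∀ x, 0 ≤ u x)
    (V c_h c_g : ℝ) (hV : 0 ≤ V) (hch : 0 < c_h) (hcg : 0 < c_g)
    (γstar : ℝ → ℝ)
    (hγ : ∀ τ : ℝ, γstar τ =
      if 0 < V - ∑ x, (if u x ≤ τ^2 then q x * u x else 0) then
        min (Real.sqrt ((c_g/c_h + ∑ x, (if u x > τ^2 then q x else 0)) /
          (V - ∑ x, (if u x ≤ τ^2 then q x * u x else 0)))) (1/τ)
      else 1/τ)
    (Js : (𝒳 → ℝ) → ℝ)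
    (hJs : ∀ f, Js f = (c_h * ∑ x, q x * f x + c_g) *
      ((V - ∑ x, q x * u x) + ∑ x, q x * (u x / f x)))
    (p : 𝒳 → ℝ) (hp : ∀ x, p x ∈ Set.Ioc (0:ℝ) 1) :
    ∃ τ, 0 < τ ∧ Js (fun x => min (γstar τ * Real.sqrt (u x)) 1) ≤ Js p := by
  classical
  set EU := ∑ x, q x * u x with hEUdef
  set K := V - EU with hKdef
  set A := ∑ x, q x * p x with hAdef
  set B := ∑ x, q x * (u x / p x) with hBdef
  have hA : 0 ≤ A := Finset.sum_nonneg fun x _ => mul_nonneg (hq x).le (hp x).1.le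
  have hE : 0 < c_h * A + c_g := by linarith [mul_nonneg hch.le hA]
  -- dividing by the clipped policy increases u
  have udiv : ∀ (g : ℝ) (x : 𝒳), 0 < g → u x ≤ u x / min (g * Real.sqrt (u x)) 1 := by
    intro g x hg
    rcases eq_or_lt_of_le (hu0 x) with h | h
    · simp [← h]
    · have hsq : 0 < Real.sqrt (u x) := Real.sqrt_pos.mpr h
      have hm0 : 0 < min (g * Real.sqrt (u x)) 1 := lt_min (by positivity) one_pos
      have hm1 : min (g * Real.sqrt (u x)) 1 ≤ 1 := min_le_right _ _
      rw [le_div_iff₀ hm0]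
      have := mul_le_mul_of_nonneg_left hm1 h.le
      simpa using this
  have hBEU : EU ≤ B := by
    apply Finset.sum_le_sum
    intro x _
    have : u x ≤ u x / p x := by
      rw [le_div_iff₀ (hp x).1]
      have := mul_le_mul_of_nonneg_left (hp x).2 (hu0 x)
      simpa using this
    exact mul_le_mul_of_nonneg_left this (hq x).le
  have hKB0 : 0 ≤ K + B := by simp only [hKdef]; linarith
  -- Lagrangian summation helper
  have lag : ∀ (g : ℝ) (f : 𝒳 → ℝ), 0 < g →
      (∀ x, 0 ≤ f x ∧ f x ≤ 1 ∧ (0 < f x ∨ u x = 0)) →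
      (1/g^2) * (∑ x, q x * min (g * Real.sqrt (u x)) 1) +
        ∑ x, q x * (u x / min (g * Real.sqrt (u x)) 1)
      ≤ (1/g^2) * (∑ x, q x * f x) + ∑ x, q x * (u x / f x) := by
    intro g f hg hf
    have hsum : ∑ x, q x * ((1/g^2) * min (g * Real.sqrt (u x)) 1
        + u x / min (g * Real.sqrt (u x)) 1)
        ≤ ∑ x, q x * ((1/g^2) * f x + u x / f x) := by
      apply Finset.sum_le_sum
      intro x _
      exact mul_le_mul_of_nonneg_left
        (ptwise g (u x) (f x) hg (hu0 x) (hf x).1 (hf x).2.1 (hf x).2.2) (hq x).le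
    calc (1/g^2) * (∑ x, q x * min (g * Real.sqrt (u x)) 1) +
          ∑ x, q x * (u x / min (g * Real.sqrt (u x)) 1)
        = ∑ x, q x * ((1/g^2) * min (g * Real.sqrt (u x)) 1
            + u x / min (g * Real.sqrt (u x)) 1) := by
          rw [Finset.mul_sum, ← Finset.sum_add_distrib]
          exact Finset.sum_congr rfl fun x _ => by ring
      _ ≤ ∑ x, q x * ((1/g^2) * f x + u x / f x) := hsum
      _ = (1/g^2) * (∑ x, q x * f x) + ∑ x, q x * (u x / f x) := by
          rw [Finset.mul_sum, ← Finset.sum_add_distrib]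
          exact Finset.sum_congr rfl fun x _ => by ring
  rcases eq_or_lt_of_le hKB0 with hzero | hKBpos
  · -- degenerate; V = 0 and everything vanishes for small τ
    have hVle : V ≤ K + B := by simp only [hKdef]; linarith
    have hV0 : V = 0 := le_antisymm (by linarith [hVle, hzero.symm ▸ le_refl (K+B)]) hV
    -- choose τ₀ with τ₀² below every positive u value
    obtain ⟨τ₀, hτ₀, hsmall⟩ : ∃ τ : ℝ, 0 < τ ∧ ∀ x, 0 < u x → τ^2 < u x := by
      by_cases hne : (Finset.univ.filter fun x => 0 < u x).Nonempty
      · set m := (Finset.univ.filter fun x => 0 < u x).inf' hne u with hm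
        have hmpos : 0 < m := by
          rw [hm, Finset.lt_inf'_iff]
          intro x hx; exact (Finset.mem_filter.mp hx).2
        refine ⟨Real.sqrt (m/2), Real.sqrt_pos.mpr (by linarith), ?_⟩
        intro x hx
        have hle : m ≤ u x := Finset.inf'_le u (Finset.mem_filter.mpr ⟨Finset.mem_univ x, hx⟩)
        rw [Real.sq_sqrt (by linarith)]
        linarith
      · refine ⟨1, one_pos, ?_⟩
        intro x hx
        exact absurd (Finset.mem_filter.mpr ⟨Finset.mem_univ x, hx⟩)
          (fun h => hne ⟨x, h⟩)
    have hcap : (∑ x, if u x ≤ τ₀^2 then q x * u x else 0) = 0 := by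
      apply Finset.sum_eq_zero
      intro x _
      split_ifs with h
      · have : u x = 0 := by
          by_contra hne
          have := hsmall x (lt_of_le_of_ne (hu0 x) (Ne.symm hne))
          linarith
        rw [this, mul_zero]
      · rfl
    have hγτ : γstar τ₀ = 1/τ₀ := by
      rw [hγ τ₀, hcap, hV0, if_neg (by norm_num)]
    have hclip : ∀ x, q x * (u x / min (γstar τ₀ * Real.sqrt (u x)) 1) = q x * u x := by
      intro x
      rcases eq_or_lt_of_le (hu0 x) with h | h
      · simp [← h]
      · have hsq : τ₀ < Real.sqrt (u x) := by
          rw [show τ₀ = Real.sqrt (τ₀^2) from (Real.sqrt_sq hτ₀.le).symm]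
          exact Real.sqrt_lt_sqrt (sq_nonneg _) (hsmall x h)
        have : 1 ≤ γstar τ₀ * Real.sqrt (u x) := by
          rw [hγτ, one_div, inv_mul_eq_div, le_div_iff₀ hτ₀, one_mul]
          exact hsq.le
        rw [min_eq_right this, div_one]
    refine ⟨τ₀, hτ₀, ?_⟩
    rw [hJs, hJs]
    have h1 : ∑ x, q x * (u x / min (γstar τ₀ * Real.sqrt (u x)) 1) = EU :=
      Finset.sum_congr rfl fun x _ => hclip x
    rw [h1]
    have h2 : (V - EU) + EU = 0 := by rw [hV0]; ring
    have h3 : (V - EU) + B = 0 := by simp only [← hKdef]; linarith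
    rw [h2, h3, mul_zero, mul_zero]
  · -- main case
    simp only [hJs]
    set lam := c_h * (K + B) / (c_h * A + c_g) with hlamdef
    have hlampos : 0 < lam := div_pos (mul_pos hch hKBpos) hE
    have hlameq : lam * (c_h * A + c_g) = c_h * (K + B) := div_mul_cancel₀ _ hE.ne'
    set τ₀ := Real.sqrt lam with hτ₀def
    have hτ₀ : 0 < τ₀ := Real.sqrt_pos.mpr hlampos
    have hτsq : τ₀^2 = lam := Real.sq_sqrt hlampos.le
    set γ : ℝ := 1/τ₀ with hγdef
    have hγpos : 0 < γ := by positivity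
    have hγsq : 1/γ^2 = lam := by
      rw [hγdef, one_div, one_div, inv_pow, inv_inv, hτsq]
    -- moments of the γ-scaled policy
    set Aγ := ∑ x, q x * min (γ * Real.sqrt (u x)) 1 with hAγdef
    set Bγ := ∑ x, q x * (u x / min (γ * Real.sqrt (u x)) 1) with hBγdef
    have hlin1 : lam * Aγ + Bγ ≤ lam * A + B := by
      have := lag γ p hγpos (fun x => ⟨(hp x).1.le, (hp x).2, Or.inl (hp x).1⟩)
      rw [hγsq] at this
      exact this
    have hBγEU : EU ≤ Bγ := Finset.sum_le_sum fun x _ =>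
      mul_le_mul_of_nonneg_left (udiv γ x hγpos) (hq x).le
    have hKBγ : 0 ≤ K + Bγ := by simp only [hKdef]; linarith
    have hJγ : (c_h * Aγ + c_g) * (K + Bγ) ≤ (c_h * A + c_g) * (K + B) :=
      prodstep c_h c_g K A B Aγ Bγ lam hE hKBpos hlameq hlin1 hKBγ
    -- threshold sums at τ₀
    set ECap := ∑ x, (if u x ≤ τ₀^2 then q x * u x else 0) with hECapdef
    set P := ∑ x, (if u x > τ₀^2 then q x else 0) with hPdef
    set T := ∑ x, (if u x > τ₀^2 then q x * u x else 0) with hTdef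
    set M := ∑ x, (if u x > τ₀^2 then 0 else q x * Real.sqrt (u x)) with hMdef
    have hsplit : ECap + T = EU := by
      rw [hECapdef, hTdef, hEUdef, ← Finset.sum_add_distrib]
      apply Finset.sum_congr rfl
      intro x _
      rcases le_or_gt (u x) (τ₀^2) with h | h
      · simp [h, not_lt.mpr h]
      · simp [h, not_le.mpr h]
    have hD₀ : V - ECap = K + T := by simp only [hKdef]; linarith
    have hM0 : 0 ≤ M := Finset.sum_nonneg fun x _ => by
      split_ifs
      · exact le_refl 0
      · exact mul_nonneg (hq x).le (Real.sqrt_nonneg _)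
    have hP0 : 0 ≤ P := Finset.sum_nonneg fun x _ => by
      split_ifs
      · exact (hq x).le
      · exact le_refl 0
    have hT0 : 0 ≤ T := Finset.sum_nonneg fun x _ => by
      split_ifs
      · exact mul_nonneg (hq x).le (hu0 x)
      · exact le_refl 0
    -- shape identities for threshold policies
    have shapeA : ∀ s : ℝ, 0 < s →
        (∑ x, q x * (if u x > τ₀^2 then 1 else s * Real.sqrt (u x))) = s*M + P := by
      intro s hs
      have hpt : ∀ x, q x * (if u x > τ₀^2 then 1 else s * Real.sqrt (u x)) =
          s * (if u x > τ₀^2 then 0 else q x * Real.sqrt (u x)) +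
          (if u x > τ₀^2 then q x else 0) := by
        intro x; split_ifs <;> ring
      rw [Finset.sum_congr rfl fun x _ => hpt x, Finset.sum_add_distrib, ← Finset.mul_sum]
    have shapeB : ∀ s : ℝ, 0 < s →
        (∑ x, q x * (u x / (if u x > τ₀^2 then 1 else s * Real.sqrt (u x)))) = M/s + T := by
      intro s hs
      have hpt : ∀ x, q x * (u x / (if u x > τ₀^2 then 1 else s * Real.sqrt (u x))) =
          (if u x > τ₀^2 then 0 else q x * Real.sqrt (u x))/s +
          (if u x > τ₀^2 then q x * u x else 0) := by
        intro x
        split_ifs with h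
        · simp
        · rcases eq_or_ne (Real.sqrt (u x)) 0 with h0 | h0
          · have hux : u x = 0 := by
              rw [← Real.mul_self_sqrt (hu0 x), h0, mul_zero]
            simp [hux, h0]
          · have hkey : u x / (s * Real.sqrt (u x)) = Real.sqrt (u x) / s := by
              rw [div_eq_div_iff (by positivity) hs.ne']
              linear_combination (-s) * (Real.mul_self_sqrt (hu0 x))
            rw [add_zero, hkey, mul_div_assoc]
      rw [Finset.sum_congr rfl fun x _ => hpt x, Finset.sum_add_distrib, ← Finset.sum_div]
    -- clipped policy has the threshold shape at its own scale γ
    have hπγshape : ∀ x, min (γ * Real.sqrt (u x)) 1 =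
        (if u x > τ₀^2 then 1 else γ * Real.sqrt (u x)) := by
      intro x
      rcases lt_or_ge (τ₀^2) (u x) with h | h
      · rw [if_pos h, min_eq_right]
        have hsq : τ₀ < Real.sqrt (u x) := by
          rw [show τ₀ = Real.sqrt (τ₀^2) from (Real.sqrt_sq hτ₀.le).symm]
          exact Real.sqrt_lt_sqrt (sq_nonneg _) h
        rw [hγdef, one_div, inv_mul_eq_div, le_div_iff₀ hτ₀, one_mul]
        exact hsq.le
      · rw [if_neg (not_lt.mpr h), min_eq_left]
        have hsq : Real.sqrt (u x) ≤ τ₀ := by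
          rw [show τ₀ = Real.sqrt (τ₀^2) from (Real.sqrt_sq hτ₀.le).symm]
          exact Real.sqrt_le_sqrt h
        calc γ * Real.sqrt (u x) ≤ γ * τ₀ := by
              exact mul_le_mul_of_nonneg_left hsq hγpos.le
          _ = 1 := by rw [hγdef]; field_simp
    have hAγ' : Aγ = γ*M + P := by
      rw [hAγdef, Finset.sum_congr rfl fun x _ => by rw [hπγshape x]]
      exact shapeA γ hγpos
    have hBγ' : Bγ = M/γ + T := by
      rw [hBγdef, Finset.sum_congr rfl fun x _ => by rw [hπγshape x]]
      exact shapeB γ hγpos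
    by_cases hD : 0 < V - ECap
    · -- positive denominator case
      set N := c_g/c_h + P with hNdef
      have hN : 0 < N := by
        have := div_pos hcg hch
        rw [hNdef]; linarith
      have hKT : 0 < K + T := hD₀ ▸ hD
      set t := Real.sqrt (N / (V - ECap)) with htdef
      have ht : 0 < t := Real.sqrt_pos.mpr (div_pos hN hD)
      have htsq : t^2 = N/(V - ECap) := Real.sq_sqrt (div_pos hN hD).le
      have hγτ : γstar τ₀ = min t γ := by
        rw [hγ τ₀]
        rw [if_pos hD]
      have hkey : c_h * t^2 * (K+T) = c_h * P + c_g := by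
        rw [htsq, hD₀, hNdef]
        field_simp
        ring
      rcases le_or_gt γ t with hge | hlt
      · have hγeq : γstar τ₀ = γ := by rw [hγτ, min_eq_right hge]
        refine ⟨τ₀, hτ₀, ?_⟩
        simp only [hγeq]
        exact hJγ
      · have hγeq : γstar τ₀ = t := by rw [hγτ, min_eq_left hlt.le]
        -- step i: Lagrange at level t against the hybrid policy
        have hfhat : ∀ x, 0 ≤ (if u x > τ₀^2 then (1:ℝ) else t * Real.sqrt (u x)) ∧
            (if u x > τ₀^2 then (1:ℝ) else t * Real.sqrt (u x)) ≤ 1 ∧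
            (0 < (if u x > τ₀^2 then (1:ℝ) else t * Real.sqrt (u x)) ∨ u x = 0) := by
          intro x
          split_ifs with h
          · exact ⟨zero_le_one, le_refl 1, Or.inl one_pos⟩
          · have hsq : Real.sqrt (u x) ≤ τ₀ := by
              rw [show τ₀ = Real.sqrt (τ₀^2) from (Real.sqrt_sq hτ₀.le).symm]
              exact Real.sqrt_le_sqrt (not_lt.mp h)
            refine ⟨by positivity, ?_, ?_⟩
            · calc t * Real.sqrt (u x) ≤ t * τ₀ := mul_le_mul_of_nonneg_left hsq ht.le
                _ ≤ γ * τ₀ := mul_le_mul_of_nonneg_right hlt.le hτ₀.le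
                _ = 1 := by rw [hγdef]; field_simp
            · rcases eq_or_lt_of_le (hu0 x) with h2 | h2
              · exact Or.inr h2.symm
              · exact Or.inl (by positivity)
        set At := ∑ x, q x * min (t * Real.sqrt (u x)) 1 with hAtdef
        set Bt := ∑ x, q x * (u x / min (t * Real.sqrt (u x)) 1) with hBtdef
        have hlin2 : (1/t^2) * At + Bt ≤ (1/t^2) * (t*M + P) + (M/t + T) := by
          have := lag t (fun x => if u x > τ₀^2 then (1:ℝ) else t * Real.sqrt (u x)) ht hfhat
          rw [shapeA t ht, shapeB t ht] at this
          exact this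
        have hAhat : 0 ≤ t*M + P := by positivity
        have hEhat : 0 < c_h * (t*M + P) + c_g := by linarith [mul_nonneg hch.le hAhat]
        have hShat : 0 < K + (M/t + T) := by
          have : 0 ≤ M/t := div_nonneg hM0 ht.le
          linarith
        have hlam2 : (1/t^2) * (c_h * (t*M + P) + c_g) = c_h * (K + (M/t + T)) := by
          have e : c_h * (t*M + P) + c_g = c_h*t*M + c_h*t^2*(K+T) := by
            linear_combination (-1 : ℝ) * hkey
          rw [e]
          field_simp
          ring
        have hBtEU : EU ≤ Bt := Finset.sum_le_sum fun x _ =>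
          mul_le_mul_of_nonneg_left (udiv t x ht) (hq x).le
        have hKBt : 0 ≤ K + Bt := by simp only [hKdef]; linarith
        have hstepi : (c_h * At + c_g) * (K + Bt) ≤
            (c_h * (t*M + P) + c_g) * (K + (M/t + T)) :=
          prodstep c_h c_g K (t*M+P) (M/t+T) At Bt (1/t^2) hEhat hShat hlam2 hlin2 hKBt
        -- step ii: unimodality in the scale
        have hψ : ∀ s : ℝ, 0 < s → (c_h*(s*M+P)+c_g)*(K+(M/s+T)) =
            (c_h*M*(K+T))*s + ((c_h*P+c_g)*M)/s + (c_h*M^2 + (c_h*P+c_g)*(K+T)) := by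
          intro s hs
          field_simp
          ring
        have hb : (c_h*P+c_g)*M = (c_h*M*(K+T))*t^2 := by linear_combination (-M) * hkey
        have huni := unimodal (c_h*M*(K+T)) ((c_h*P+c_g)*M) t γ
          (mul_nonneg (mul_nonneg hch.le hM0) hKT.le) ht hγpos hb
        have hstepii : (c_h*(t*M+P)+c_g)*(K+(M/t+T)) ≤ (c_h*(γ*M+P)+c_g)*(K+(M/γ+T)) := by
          rw [hψ t ht, hψ γ hγpos]
          linarith
        refine ⟨τ₀, hτ₀, ?_⟩
        simp only [hγeq]
        calc (c_h * At + c_g) * (K + Bt)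
            ≤ (c_h*(t*M+P)+c_g)*(K+(M/t+T)) := hstepi
          _ ≤ (c_h*(γ*M+P)+c_g)*(K+(M/γ+T)) := hstepii
          _ = (c_h * Aγ + c_g) * (K + Bγ) := by rw [hAγ', hBγ']
          _ ≤ (c_h * A + c_g) * (K + B) := hJγ
    · -- denominator nonpositive
      have hγeq : γstar τ₀ = γ := by rw [hγ τ₀, if_neg hD]
      refine ⟨τ₀, hτ₀, ?_⟩
      simp only [hγeq]
      exact hJγ

open MeasureTheory ProbabilityTheory

section bridge
variable {Ω 𝒳 : Type*} [MeasurableSpace Ω] [Fintype 𝒳] [MeasurableSpace 𝒳]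
  [MeasurableSingletonClass 𝒳] (μ : Measure Ω) [IsProbabilityMeasure μ]
  (X : Ω → 𝒳)

lemma int_comp (hX : Measurable X) (F : Ω → ℝ) (hF : Integrable F μ) (f : 𝒳 → ℝ) :
    ∫ ω, F ω * f (X ω) ∂μ = ∑ x, (∫ ω in X ⁻¹' {x}, F ω ∂μ) * f x := by
  have hmeas : ∀ x : 𝒳, MeasurableSet (X ⁻¹' {x}) := fun x => hX (measurableSet_singleton x)
  have hpt : ∀ ω, F ω * f (X ω) = ∑ x, Set.indicator (X ⁻¹' {x}) F ω * f x := by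
    intro ω
    rw [Finset.sum_eq_single (X ω)]
    · rw [Set.indicator_of_mem (by simp : ω ∈ X ⁻¹' {X ω})]
    · intro b _ hb
      rw [Set.indicator_of_notMem (by simp [hb.symm] : ω ∉ X ⁻¹' {b}), zero_mul]
    · intro h; exact absurd (Finset.mem_univ _) h
  rw [show (fun ω => F ω * f (X ω)) = fun ω => ∑ x, Set.indicator (X ⁻¹' {x}) F ω * f x from
    funext hpt]
  rw [integral_finset_sum _ fun x _ => (hF.indicator (hmeas x)).mul_const (f x)]
  exact Finset.sum_congr rfl fun x _ => by
    rw [integral_mul_const, integral_indicator (hmeas x)]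

lemma int_comp_one (hX : Measurable X) (f : 𝒳 → ℝ) :
    ∫ ω, f (X ω) ∂μ = ∑ x, (μ (X ⁻¹' {x})).toReal * f x := by
  have h := int_comp μ X hX (fun _ => (1:ℝ)) ((integrable_const (1:ℝ))) f
  simp only [one_mul] at h
  rw [h]
  exact Finset.sum_congr rfl fun x _ => by
    rw [setIntegral_const, smul_eq_mul, mul_one]; rfl

lemma meas_toReal (hX : Measurable X) (P : 𝒳 → Prop) [DecidablePred P] :
    (μ (X ⁻¹' {x | P x})).toReal = ∑ x, (if P x then (μ (X ⁻¹' {x})).toReal else 0) := by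
  have hmeasS : MeasurableSet (X ⁻¹' {x | P x}) :=
    hX (Set.Finite.measurableSet (Set.toFinite _))
  classical
  have h := int_comp_one μ X hX (fun x => if P x then (1:ℝ) else 0)
  have hind : ∀ ω, Set.indicator (X ⁻¹' {x | P x}) (1 : Ω → ℝ) ω
      = (fun x => if P x then (1:ℝ) else 0) (X ω) := by
    intro ω
    rw [Set.indicator_apply]
    simp [Set.mem_preimage, Set.mem_setOf_eq]
  rw [← measureReal_def, ← integral_indicator_one hmeasS,
    show (Set.indicator (X ⁻¹' {x | P x}) (1 : Ω → ℝ)) = fun ω =>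
      (fun x => if P x then (1:ℝ) else 0) (X ω) from funext hind, h]
  exact Finset.sum_congr rfl fun x _ => by split_ifs <;> simp

end bridge

/-- On a probability space with finite input space `𝒳` (each value of `X` having
positive probability), `u(x) = 𝔼[(H−G)² | X = x]`, `U = u(X)`, `c_h > c_g > 0`, `ℙ(G ≠ H) > 0`,
define for `τ > 0` the scale
`γ*(τ) = min(√((c_g/c_h + ℙ(U > τ²))/(Var(H) − 𝔼[U·1{U ≤ τ²}])), 1/τ)` (when the denominator is
positive, and `1/τ` otherwise), the scaled and clipped policy
`π_clip(x; τ) = min(γ*(τ)·√(u(x)), 1)`, and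
`g(τ) = (c_h·𝔼[π_clip(X; τ)] + c_g)·(Var(H) + 𝔼[U·(1/π_clip(X; τ) − 1)])`.
If `τ* > 0` minimizes `g` over `(0, ∞)`, then `π_active = π_clip(·; τ*)` minimizes
`J(π) = (c_h·𝔼[π(X)] + c_g)·(Var(H) − 𝔼[(H−G)²] + 𝔼[(H−G)²/π(X)])` over all policies
`π : 𝒳 → (0,1]`. -/
theorem stmt_2
    {Ω 𝒳 : Type*} [MeasurableSpace Ω] [Fintype 𝒳] [MeasurableSpace 𝒳]
    [MeasurableSingletonClass 𝒳]
    (μ : Measure Ω) [IsProbabilityMeasure μ]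
    (X : Ω → 𝒳) (hX : Measurable X) (hXpos : ∀ x, 0 < μ (X ⁻¹' {x}))
    (G H : Ω → ℝ) (hGm : Measurable G) (hHm : Measurable H)
    (hG : MemLp G 2 μ) (hH : MemLp H 2 μ)
    (c_h c_g : ℝ) (hc : c_h > c_g) (hcg : c_g > 0)
    (hne : 0 < μ {ω | G ω ≠ H ω})
    (u : 𝒳 → ℝ)
    (hu : ∀ x, u x = (∫ ω in X ⁻¹' {x}, (H ω - G ω) ^ 2 ∂μ) / (μ (X ⁻¹' {x})).toReal)
    (γstar : ℝ → ℝ)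
    (hγ : ∀ τ, γstar τ =
      if 0 < variance H μ - ∫ ω, (if u (X ω) ≤ τ ^ 2 then u (X ω) else 0) ∂μ then
        min (Real.sqrt ((c_g / c_h + (μ {ω | u (X ω) > τ ^ 2}).toReal) /
            (variance H μ - ∫ ω, (if u (X ω) ≤ τ ^ 2 then u (X ω) else 0) ∂μ)))
          (1 / τ)
      else 1 / τ)
    (πclip : 𝒳 → ℝ → ℝ)
    (hπclip : ∀ x τ, πclip x τ = min (γstar τ * Real.sqrt (u x)) 1)
    (g : ℝ → ℝ)
    (hg : ∀ τ, g τ = (c_h * ∫ ω, πclip (X ω) τ ∂μ + c_g) *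
      (variance H μ + ∫ ω, u (X ω) * (1 / πclip (X ω) τ - 1) ∂μ))
    (J : (𝒳 → ℝ) → ℝ)
    (hJ : ∀ π : 𝒳 → ℝ, J π = (c_h * ∫ ω, π (X ω) ∂μ + c_g) *
      (variance H μ - ∫ ω, (H ω - G ω) ^ 2 ∂μ + ∫ ω, (H ω - G ω) ^ 2 / π (X ω) ∂μ))
    (τstar : ℝ) (hτpos : 0 < τstar) (hτmin : ∀ τ > 0, g τstar ≤ g τ) :
    ∀ π : 𝒳 → ℝ, (∀ x, π x ∈ Set.Ioc (0 : ℝ) 1) →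
      J (fun x => πclip x τstar) ≤ J π := by

  classical
  intro π hπ
  set q : 𝒳 → ℝ := fun x => (μ (X ⁻¹' {x})).toReal with hqdef
  have hq : ∀ x, 0 < q x := fun x => ENNReal.toReal_pos (hXpos x).ne' (measure_ne_top μ _)
  have hmeas : ∀ x : 𝒳, MeasurableSet (X ⁻¹' {x}) := fun x => hX (measurableSet_singleton x)
  have hF : Integrable (fun ω => (H ω - G ω)^2) μ := by
    have := (hH.sub hG).integrable_sq
    simpa using this
  have hI : ∀ x, (∫ ω in X ⁻¹' {x}, (H ω - G ω)^2 ∂μ) = q x * u x := by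
    intro x
    rw [hu x, mul_div_cancel₀ _ (hq x).ne']
  have hu0 : ∀ x, 0 ≤ u x := by
    intro x
    rw [hu x]
    exact div_nonneg (setIntegral_nonneg (hmeas x) fun ω _ => sq_nonneg _) ENNReal.toReal_nonneg
  have hV : 0 ≤ variance H μ := variance_nonneg H μ
  have hch : 0 < c_h := hcg.trans hc
  have bridgeJ : ∀ f : 𝒳 → ℝ, J f = (c_h * ∑ x, q x * f x + c_g) *
      ((variance H μ - ∑ x, q x * u x) + ∑ x, q x * (u x / f x)) := by
    intro f
    rw [hJ f]
    have e1 : ∫ ω, f (X ω) ∂μ = ∑ x, q x * f x := int_comp_one μ X hX f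
    have e2 : ∫ ω, (H ω - G ω)^2 ∂μ = ∑ x, q x * u x := by
      have h := int_comp μ X hX _ hF (fun _ => (1:ℝ))
      simp only [mul_one] at h
      rw [h]
      exact Finset.sum_congr rfl fun x _ => hI x
    have e3 : ∫ ω, (H ω - G ω)^2 / f (X ω) ∂μ = ∑ x, q x * (u x / f x) := by
      have h := int_comp μ X hX _ hF (fun x => (f x)⁻¹)
      simp only [div_eq_mul_inv]
      rw [h]
      exact Finset.sum_congr rfl fun x _ => by rw [hI x, mul_assoc]
    rw [e1, e2, e3]
  have bridgeγ : ∀ τ : ℝ, γstar τ =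
      if 0 < variance H μ - ∑ x, (if u x ≤ τ^2 then q x * u x else 0) then
        min (Real.sqrt ((c_g/c_h + ∑ x, (if u x > τ^2 then q x else 0)) /
          (variance H μ - ∑ x, (if u x ≤ τ^2 then q x * u x else 0)))) (1/τ)
      else 1/τ := by
    intro τ
    have e1 : ∫ ω, (if u (X ω) ≤ τ^2 then u (X ω) else 0) ∂μ
        = ∑ x, (if u x ≤ τ^2 then q x * u x else 0) := by
      have h := int_comp_one μ X hX (fun x => if u x ≤ τ^2 then u x else 0)
      rw [h]
      exact Finset.sum_congr rfl fun x _ => by split_ifs <;> simp [hqdef]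
    have e2 : (μ {ω | u (X ω) > τ^2}).toReal = ∑ x, (if u x > τ^2 then q x else 0) := by
      have hset : {ω | u (X ω) > τ^2} = X ⁻¹' {x | u x > τ^2} := rfl
      rw [hset, meas_toReal μ X hX (fun x => u x > τ^2)]
    rw [hγ τ, e1, e2]
  have hπfun : ∀ τ, (fun x => πclip x τ) = fun x => min (γstar τ * Real.sqrt (u x)) 1 :=
    fun τ => funext fun x => hπclip x τ
  have bridgeg : ∀ τ, g τ = J (fun x => πclip x τ) := by
    intro τ
    rw [hg τ, bridgeJ]
    have e1 : ∫ ω, πclip (X ω) τ ∂μ = ∑ x, q x * πclip x τ :=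
      int_comp_one μ X hX (fun x => πclip x τ)
    have e2 : ∫ ω, u (X ω) * (1/πclip (X ω) τ - 1) ∂μ
        = ∑ x, q x * (u x * (1/πclip x τ - 1)) :=
      int_comp_one μ X hX (fun x => u x * (1/πclip x τ - 1))
    rw [e1, e2]
    have e3 : ∑ x, q x * (u x * (1/πclip x τ - 1))
        = ∑ x, (q x * (u x / πclip x τ) - q x * u x) :=
      Finset.sum_congr rfl fun x _ => by ring
    rw [e3, Finset.sum_sub_distrib]
    ring
  obtain ⟨τ₀, hτ₀, hle⟩ := key_exists q u hq hu0 (variance H μ) c_h c_g hV hch hcg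
    γstar bridgeγ J bridgeJ π hπ
  calc J (fun x => πclip x τstar) = g τstar := (bridgeg τstar).symm
    _ ≤ g τ₀ := hτmin τ₀ hτ₀
    _ = J (fun x => πclip x τ₀) := bridgeg τ₀
    _ = J (fun x => min (γstar τ₀ * Real.sqrt (u x)) 1) := by rw [hπfun τ₀]
    _ ≤ J π := hle
end

section
/- Assume c_h > c_g > 0 and ℙ(G ≠ H) > 0. Suppose the conditional squared error is homoskedastic, i.e. u(x) = 𝔼[(H − G)²] for every x ∈ 𝒳, and suppose 𝔼[(H − G)²] < (c_h/(c_h + c_g))·Var(H). Then the constant policy π(x) ≡ √( (c_g/c_h) · 𝔼[(H − G)²] / (Var(H) − 𝔼[(H − G)²]) ) minimizes J(π) = (c_h·𝔼[π(X)] + c_g)·(Var(H) − 𝔼[(H − G)²] + 𝔼[(H − G)²/π(X)]) over all policies π : 𝒳 → (0,1]; that is, the optimal active policy reduces to the optimal random policy. -/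
open MeasureTheory ProbabilityTheory

lemma stmt3_aux (ch cg D E A C s : ℝ) (hch : 0 < ch) (hcg : 0 < cg)
    (hD : 0 < D) (hE : 0 < E) (hs : 0 < s)
    (hkey : ch * D * s ^ 2 = cg * E) (hA : 0 < A) (hAC : 1 ≤ A * C) :
    (ch * s + cg) * (D + E / s) ≤ (ch * A + cg) * (D + E * C) := by
  set T : ℝ := E / s with hT
  have h3 : s * T = E := mul_div_cancel₀ E hs.ne'
  have h2 : cg * T = ch * D * s := by
    rw [hT, mul_div_assoc', div_eq_iff hs.ne']
    nlinarith [hkey]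
  have h4 : ch * D * (s ^ 2 * C) = cg * (E * C) := by
    linear_combination C * hkey
  have h5 : ch * (s * T) = ch * E := by rw [h3]
  have hstep : 0 ≤ A + s ^ 2 * C - 2 * s := by
    have h1 : (A - s) ^ 2 ≤ A * (A + s ^ 2 * C - 2 * s) := by
      nlinarith [hAC, sq_nonneg s]
    nlinarith [sq_nonneg (A - s), hA]
  nlinarith [mul_nonneg (mul_nonneg hch.le hD.le) hstep,
    mul_nonneg (mul_nonneg hch.le hE.le) (by linarith : (0:ℝ) ≤ A * C - 1),
    h2, h4, h5]

/-- On a probability space with finite input space `𝒳` (each value of `X` having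
positive probability), with `c_h > c_g > 0` and `ℙ(G ≠ H) > 0`, suppose the conditional squared
error is homoskedastic: `u(x) = 𝔼[(H − G)² | X = x] = 𝔼[(H − G)²]` for all `x`, and
`𝔼[(H − G)²] < (c_h/(c_h + c_g))·Var(H)`. Then the constant policy
`π ≡ √((c_g/c_h)·𝔼[(H − G)²]/(Var(H) − 𝔼[(H − G)²]))` is a valid policy (values in `(0,1]`)
and minimizes `J(π) = (c_h·𝔼[π(X)] + c_g)·(Var(H) − 𝔼[(H−G)²] + 𝔼[(H−G)²/π(X)])` over all
policies `π : 𝒳 → (0,1]`. -/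
theorem stmt_3
    {Ω 𝒳 : Type*} [MeasurableSpace Ω] [Fintype 𝒳] [MeasurableSpace 𝒳]
    [MeasurableSingletonClass 𝒳]
    (μ : Measure Ω) [IsProbabilityMeasure μ]
    (X : Ω → 𝒳) (hX : Measurable X) (hXpos : ∀ x, 0 < μ (X ⁻¹' {x}))
    (G H : Ω → ℝ) (hGm : Measurable G) (hHm : Measurable H)
    (hG : MemLp G 2 μ) (hH : MemLp H 2 μ)
    (c_h c_g : ℝ) (hc : c_h > c_g) (hcg : c_g > 0)
    (hne : 0 < μ {ω | G ω ≠ H ω})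
    (u : 𝒳 → ℝ)
    (hu : ∀ x, u x = (∫ ω in X ⁻¹' {x}, (H ω - G ω) ^ 2 ∂μ) / (μ (X ⁻¹' {x})).toReal)
    (hhomo : ∀ x, u x = ∫ ω, (H ω - G ω) ^ 2 ∂μ)
    (hsmall : ∫ ω, (H ω - G ω) ^ 2 ∂μ < c_h / (c_h + c_g) * variance H μ)
    (J : (𝒳 → ℝ) → ℝ)
    (hJ : ∀ π : 𝒳 → ℝ, J π = (c_h * ∫ ω, π (X ω) ∂μ + c_g) *
      (variance H μ - ∫ ω, (H ω - G ω) ^ 2 ∂μ + ∫ ω, (H ω - G ω) ^ 2 / π (X ω) ∂μ))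
    (pstar : ℝ)
    (hps : pstar = Real.sqrt (c_g / c_h * ((∫ ω, (H ω - G ω) ^ 2 ∂μ) /
      (variance H μ - ∫ ω, (H ω - G ω) ^ 2 ∂μ)))) :
    pstar ∈ Set.Ioc (0 : ℝ) 1 ∧
      ∀ π : 𝒳 → ℝ, (∀ x, π x ∈ Set.Ioc (0 : ℝ) 1) → J (fun _ => pstar) ≤ J π := by
  have hch : 0 < c_h := hcg.trans hc
  have hcc : 0 < c_h + c_g := by linarith
  set E : ℝ := ∫ ω, (H ω - G ω) ^ 2 ∂μ with hEdef
  set V : ℝ := variance H μ with hVdef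
  -- integrability of (H-G)^2
  have hsqi : Integrable (fun ω => (H ω - G ω) ^ 2) μ := by
    have := (hH.sub hG).integrable_sq
    simpa [Pi.sub_apply] using this
  -- E > 0
  have hE : 0 < E := by
    rw [hEdef, integral_pos_iff_support_of_nonneg (fun ω => sq_nonneg _) hsqi]
    have hs : Function.support (fun ω => (H ω - G ω) ^ 2) = {ω | G ω ≠ H ω} := by
      ext ω
      simp only [Function.mem_support, Set.mem_setOf_eq, ne_eq, pow_eq_zero_iff,
        sub_eq_zero, two_ne_zero, not_false_eq_true, and_true]
      exact ⟨fun h h' => h h'.symm, fun h h' => h h'.symm⟩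
    rw [hs]; exact hne
  have hsmall' : (c_h + c_g) * E < c_h * V := by
    rw [div_mul_eq_mul_div, lt_div_iff₀ hcc] at hsmall
    linarith
  have hD : 0 < V - E := by nlinarith
  -- pstar properties
  have harg : 0 < c_g / c_h * (E / (V - E)) := by positivity
  have harg1 : c_g / c_h * (E / (V - E)) ≤ 1 := by
    rw [div_mul_div_comm, div_le_one (by positivity)]
    nlinarith
  have hps_pos : 0 < pstar := by rw [hps]; exact Real.sqrt_pos.2 harg
  have hps_sq : pstar ^ 2 = c_g / c_h * (E / (V - E)) := by
    rw [hps, Real.sq_sqrt harg.le]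
  have hps_le : pstar ≤ 1 := by rw [hps]; exact Real.sqrt_le_one.2 harg1
  have hkey : c_h * (V - E) * pstar ^ 2 = c_g * E := by
    rw [hps_sq]; field_simp
  refine ⟨⟨hps_pos, hps_le⟩, ?_⟩
  intro π hπ
  have hπpos : ∀ x, 0 < π x := fun x => (hπ x).1
  -- p x
  set p : 𝒳 → ℝ := fun x => (μ (X ⁻¹' {x})).toReal with hpdef
  have hppos : ∀ x, 0 < p x :=
    fun x => ENNReal.toReal_pos (hXpos x).ne' (measure_ne_top μ _)
  have hpsum : ∑ x, p x = 1 := by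
    rw [hpdef]
    rw [← ENNReal.toReal_sum (fun x _ => measure_ne_top μ _)]
    rw [MeasureTheory.sum_measure_preimage_singleton _
      (fun y _ => hX (MeasurableSet.singleton y))]
    simp
  -- fiber integral
  have hfib : ∀ x, (∫ ω in X ⁻¹' {x}, (H ω - G ω) ^ 2 ∂μ) = E * p x := by
    intro x
    have h1 := (hhomo x).symm.trans (hu x)
    rw [eq_div_iff (hppos x).ne'] at h1
    linarith [h1]
  -- decomposition lemma
  have hdecomp : ∀ f : Ω → ℝ, Integrable f μ →
      (∫ ω, f ω ∂μ) = ∑ x, ∫ ω in X ⁻¹' {x}, f ω ∂μ := by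
    intro f hf
    have huniv : (Set.univ : Set Ω) = ⋃ x ∈ (Finset.univ : Finset 𝒳), X ⁻¹' {x} := by
      ext ω; simp
    rw [← setIntegral_univ, huniv,
      integral_biUnion_finset _ (fun x _ => hX (MeasurableSet.singleton x))
        (fun x _ y _ hxy => Set.disjoint_left.2 (by
          intro ω h1 h2
          simp only [Set.mem_preimage, Set.mem_singleton_iff] at h1 h2
          exact hxy (h1 ▸ h2 ▸ rfl)))
        (fun x _ => hf.integrableOn)]
  -- integrability of compositions
  have hint : ∀ g : 𝒳 → ℝ, Integrable (fun ω => g (X ω)) μ := by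
    intro g
    obtain ⟨C, hC⟩ := Finite.exists_le (fun x => ‖g x‖)
    have : Integrable (fun ω => g (X ω) * 1) μ :=
      (integrable_const (1 : ℝ)).bdd_mul
        ((measurable_of_countable g).comp hX).aestronglyMeasurable (Filter.Eventually.of_forall fun ω => hC (X ω))
    simpa using this
  have hint2 : ∀ g : 𝒳 → ℝ, Integrable (fun ω => (H ω - G ω) ^ 2 / g (X ω)) μ := by
    intro g
    obtain ⟨C, hC⟩ := Finite.exists_le (fun x => ‖(g x)⁻¹‖)
    have : Integrable (fun ω => (g (X ω))⁻¹ * (H ω - G ω) ^ 2) μ :=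
      hsqi.bdd_mul ((measurable_of_countable fun x => (g x)⁻¹).comp hX).aestronglyMeasurable
        (Filter.Eventually.of_forall fun ω => hC (X ω))
    simpa [div_eq_inv_mul] using this
  -- compute the set integrals
  have hsetA : ∀ (g : 𝒳 → ℝ) (x : 𝒳), (∫ ω in X ⁻¹' {x}, g (X ω) ∂μ) = p x * g x := by
    intro g x
    rw [setIntegral_congr_fun (hX (MeasurableSet.singleton x))
      (g := fun _ => g x) (fun ω hω => by
        simp only [Set.mem_preimage, Set.mem_singleton_iff] at hω; rw [hω])]
    rw [setIntegral_const]
    simp [hpdef, smul_eq_mul, Measure.real]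
  have hsetB : ∀ x, (∫ ω in X ⁻¹' {x}, (H ω - G ω) ^ 2 / π (X ω) ∂μ)
      = E * p x / π x := by
    intro x
    rw [setIntegral_congr_fun (hX (MeasurableSet.singleton x))
      (g := fun ω => (H ω - G ω) ^ 2 / π x) (fun ω hω => by
        simp only [Set.mem_preimage, Set.mem_singleton_iff] at hω; rw [hω])]
    rw [integral_div, hfib]
  -- the two averages
  set A : ℝ := ∑ x, p x * π x with hAdef
  set C : ℝ := ∑ x, p x / π x with hCdef
  have hintA : (∫ ω, π (X ω) ∂μ) = A := by
    rw [hdecomp _ (hint π), hAdef]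
    exact Finset.sum_congr rfl fun x _ => hsetA π x
  have hintB : (∫ ω, (H ω - G ω) ^ 2 / π (X ω) ∂μ) = E * C := by
    rw [hdecomp _ (hint2 π), hCdef, Finset.mul_sum]
    exact Finset.sum_congr rfl fun x _ => by rw [hsetB x, mul_div_assoc]
  -- Cauchy-Schwarz: 1 ≤ A * C
  have hAC : 1 ≤ A * C := by
    have hcs := Finset.sum_mul_sq_le_sq_mul_sq Finset.univ
      (fun x => Real.sqrt (p x * π x)) (fun x => Real.sqrt (p x / π x))
    have h1 : ∀ x : 𝒳, Real.sqrt (p x * π x) * Real.sqrt (p x / π x) = p x := by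
      intro x
      rw [← Real.sqrt_mul (mul_pos (hppos x) (hπpos x)).le]
      have hne' : π x ≠ 0 := (hπpos x).ne'
      have heq : p x * π x * (p x / π x) = p x * p x := by
        field_simp
      rw [heq, Real.sqrt_mul_self (hppos x).le]
    have h2 : ∀ x : 𝒳, Real.sqrt (p x * π x) ^ 2 = p x * π x :=
      fun x => Real.sq_sqrt (mul_pos (hppos x) (hπpos x)).le
    have h3 : ∀ x : 𝒳, Real.sqrt (p x / π x) ^ 2 = p x / π x :=
      fun x => Real.sq_sqrt (div_pos (hppos x) (hπpos x)).le
    simp only [h1, h2, h3] at hcs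
    rw [hpsum] at hcs
    simpa [hAdef, hCdef] using hcs
  have hXne : (Finset.univ : Finset 𝒳).Nonempty := by
    by_contra h
    rw [Finset.not_nonempty_iff_eq_empty] at h
    rw [h] at hpsum
    simp at hpsum
  have hApos : 0 < A :=
    Finset.sum_pos (fun x _ => mul_pos (hppos x) (hπpos x)) hXne
  have hCpos : 0 < C :=
    Finset.sum_pos (fun x _ => div_pos (hppos x) (hπpos x)) hXne
  -- compute J at the constant policy
  have hconst : (∫ ω, (fun _ : 𝒳 => pstar) (X ω) ∂μ) = pstar := by simp
  have hconst2 : (∫ ω, (H ω - G ω) ^ 2 / (fun _ : 𝒳 => pstar) (X ω) ∂μ) = E / pstar := by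
    simp only
    rw [integral_div]
  rw [hJ, hJ, hconst, hconst2, hintA, hintB]
  exact stmt3_aux c_h c_g (V - E) E A C pstar hch hcg hD hE hps_pos hkey hApos hAC
end

section
/- Fix λ ∈ ℝ and define the power-tuned increment Δ^{π,λ} = λ·G + (H − λ·G)·ξ/π(X). Suppose 𝔼[(H − λG)²/π(X)] < ∞. Then 𝔼[Δ^{π,λ}] = 𝔼[H] for every λ ∈ ℝ, and Var(Δ^{π,λ}) = Var(H) − 𝔼[(H − λG)²] + 𝔼[(H − λG)²/π(X)]. -/
open MeasureTheory ProbabilityTheory Filter Topology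

section Aux

variable {Ω : Type*} {mΩ : MeasurableSpace Ω} {μ : Measure Ω}

/-- Pull-out property at the level of integrals. -/
lemma stmt5_pullout {m : MeasurableSpace Ω} (hm : m ≤ mΩ) [IsProbabilityMeasure μ]
    {ξ p f : Ω → ℝ} (hξ : Integrable ξ μ)
    (hcond : μ[ξ|m] =ᵐ[μ] p)
    (hf : StronglyMeasurable[m] f) (hfξ : Integrable (fun ω => f ω * ξ ω) μ) :
    ∫ ω, f ω * ξ ω ∂μ = ∫ ω, f ω * p ω ∂μ := by
  have h2 : μ[f * ξ|m] =ᵐ[μ] f * μ[ξ|m] :=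
    condExp_mul_of_stronglyMeasurable_left hf hfξ hξ
  have h3 : μ[f * ξ|m] =ᵐ[μ] fun ω => f ω * p ω :=
    h2.trans (hcond.mono fun ω hω => by simp [hω])
  calc ∫ ω, f ω * ξ ω ∂μ = ∫ ω, (μ[f * ξ|m]) ω ∂μ := (integral_condExp (f := fun ω => f ω * ξ ω) hm).symm
    _ = ∫ ω, f ω * p ω ∂μ := integral_congr_ae h3

/-- Pull-out property for nonnegative `m`-measurable `f`, giving integrability for free. -/
lemma stmt5_pullout_nonneg {m : MeasurableSpace Ω} (hm : m ≤ mΩ) [IsProbabilityMeasure μ]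
    {ξ p f : Ω → ℝ} (hξm : Measurable[mΩ] ξ) (hξ01 : ∀ ω, ξ ω = 0 ∨ ξ ω = 1)
    (hcond : μ[ξ|m] =ᵐ[μ] p) (hpm : Measurable[mΩ] p) (hp0 : ∀ ω, 0 ≤ p ω)
    (hf : Measurable[m] f) (hf0 : ∀ ω, 0 ≤ f ω)
    (hfp : Integrable (fun ω => f ω * p ω) μ) :
    Integrable (fun ω => f ω * ξ ω) μ ∧ ∫ ω, f ω * ξ ω ∂μ = ∫ ω, f ω * p ω ∂μ := by
  have hξ0 : ∀ ω, 0 ≤ ξ ω := fun ω => by rcases hξ01 ω with h | h <;> simp [h]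
  have hξ1 : ∀ ω, ξ ω ≤ 1 := fun ω => by rcases hξ01 ω with h | h <;> simp [h]
  have hξint : Integrable ξ μ :=
    (integrable_const (1:ℝ)).mono' hξm.aestronglyMeasurable
      (ae_of_all _ fun ω => by
        rw [Real.norm_eq_abs, abs_of_nonneg (hξ0 ω)]; exact hξ1 ω)
  have hfm : Measurable[mΩ] f := hf.mono hm le_rfl
  have hfn_m : ∀ n : ℕ, Measurable[m] (fun ω => min (f ω) (n:ℝ)) := fun n =>
    hf.min measurable_const
  have hfn_meas : ∀ n : ℕ, Measurable[mΩ] (fun ω => min (f ω) (n:ℝ)) := fun n =>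
    hfm.min measurable_const
  have hfn0 : ∀ (n : ℕ) ω, 0 ≤ min (f ω) (n:ℝ) := fun n ω =>
    le_min (hf0 ω) (Nat.cast_nonneg n)
  have hfn_mono : ∀ ω, Monotone fun n : ℕ => min (f ω) (n:ℝ) := fun ω a b hab =>
    min_le_min le_rfl (Nat.cast_le.mpr hab)
  have hfn_tendsto : ∀ ω, Tendsto (fun n : ℕ => min (f ω) (n:ℝ)) atTop (𝓝 (f ω)) := fun ω => by
    refine tendsto_atTop_of_eventually_const (i₀ := ⌈f ω⌉₊) fun n hn => ?_
    exact min_eq_left ((Nat.le_ceil _).trans (Nat.cast_le.mpr hn))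
  have hfnξ_int : ∀ n : ℕ, Integrable (fun ω => min (f ω) (n:ℝ) * ξ ω) μ := fun n =>
    (integrable_const (n:ℝ)).mono' ((hfn_meas n).mul hξm).aestronglyMeasurable
      (ae_of_all _ fun ω => by
        rw [Real.norm_eq_abs, abs_mul, abs_of_nonneg (hfn0 n ω), abs_of_nonneg (hξ0 ω)]
        calc min (f ω) (n:ℝ) * ξ ω ≤ min (f ω) (n:ℝ) * 1 :=
              mul_le_mul_of_nonneg_left (hξ1 ω) (hfn0 n ω)
          _ ≤ (n:ℝ) := by rw [mul_one]; exact min_le_right _ _)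
  have key : ∀ n : ℕ, ∫ ω, min (f ω) (n:ℝ) * ξ ω ∂μ = ∫ ω, min (f ω) (n:ℝ) * p ω ∂μ := fun n =>
    stmt5_pullout hm hξint hcond ((hfn_m n).stronglyMeasurable) (hfnξ_int n)
  have hfnp_int : ∀ n : ℕ, Integrable (fun ω => min (f ω) (n:ℝ) * p ω) μ := fun n =>
    hfp.mono' ((hfn_meas n).mul hpm).aestronglyMeasurable
      (ae_of_all _ fun ω => by
        rw [Real.norm_eq_abs, abs_mul, abs_of_nonneg (hfn0 n ω), abs_of_nonneg (hp0 ω)]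
        exact mul_le_mul_of_nonneg_right (min_le_left _ _) (hp0 ω))
  have htendsto_p : Tendsto (fun n : ℕ => ∫ ω, min (f ω) (n:ℝ) * p ω ∂μ) atTop
      (𝓝 (∫ ω, f ω * p ω ∂μ)) := by
    refine integral_tendsto_of_tendsto_of_monotone hfnp_int hfp ?_ ?_
    · exact ae_of_all _ fun ω a b hab =>
        mul_le_mul_of_nonneg_right (hfn_mono ω hab) (hp0 ω)
    · exact ae_of_all _ fun ω => (hfn_tendsto ω).mul_const _
  have hL : ∫⁻ ω, ENNReal.ofReal (f ω * ξ ω) ∂μ = ENNReal.ofReal (∫ ω, f ω * p ω ∂μ) := by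
    have h1 : Tendsto (fun n : ℕ => ∫⁻ ω, ENNReal.ofReal (min (f ω) (n:ℝ) * ξ ω) ∂μ) atTop
        (𝓝 (∫⁻ ω, ENNReal.ofReal (f ω * ξ ω) ∂μ)) := by
      refine lintegral_tendsto_of_tendsto_of_monotone
        (fun n => ((hfn_meas n).mul hξm).ennreal_ofReal.aemeasurable) ?_ ?_
      · exact ae_of_all _ fun ω a b hab => ENNReal.ofReal_le_ofReal
          (mul_le_mul_of_nonneg_right (hfn_mono ω hab) (hξ0 ω))
      · exact ae_of_all _ fun ω => (ENNReal.continuous_ofReal.tendsto _).comp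
          ((hfn_tendsto ω).mul_const _)
    have h2 : ∀ n : ℕ, ∫⁻ ω, ENNReal.ofReal (min (f ω) (n:ℝ) * ξ ω) ∂μ
        = ENNReal.ofReal (∫ ω, min (f ω) (n:ℝ) * p ω ∂μ) := fun n => by
      rw [← ofReal_integral_eq_lintegral_ofReal (hfnξ_int n)
        (ae_of_all _ fun ω => mul_nonneg (hfn0 n ω) (hξ0 ω)), key n]
    have h3 : Tendsto (fun n : ℕ => ENNReal.ofReal (∫ ω, min (f ω) (n:ℝ) * p ω ∂μ)) atTop
        (𝓝 (ENNReal.ofReal (∫ ω, f ω * p ω ∂μ))) :=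
      (ENNReal.continuous_ofReal.tendsto _).comp htendsto_p
    simp only [h2] at h1
    exact tendsto_nhds_unique h1 h3
  have hint_fξ : Integrable (fun ω => f ω * ξ ω) μ := by
    refine ⟨(hfm.mul hξm).aestronglyMeasurable, ?_⟩
    rw [hasFiniteIntegral_iff_ofReal (ae_of_all _ fun ω => mul_nonneg (hf0 ω) (hξ0 ω)), hL]
    exact ENNReal.ofReal_lt_top
  refine ⟨hint_fξ, ?_⟩
  rw [integral_eq_lintegral_of_nonneg_ae (ae_of_all _ fun ω => mul_nonneg (hf0 ω) (hξ0 ω))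
    (hfm.mul hξm).aestronglyMeasurable, hL,
    ENNReal.toReal_ofReal (integral_nonneg fun ω => mul_nonneg (hf0 ω) (hp0 ω))]

end Aux

/-- For a fixed tuning parameter `λ ∈ ℝ`, the power-tuned increment
`Δ^{π,λ} = λ·G + (H − λ·G)·ξ/π(X)` (with `ξ` conditionally Bernoulli(`π(X)`) given
`(X, G, H)`) satisfies `𝔼[Δ^{π,λ}] = 𝔼[H]` and
`Var(Δ^{π,λ}) = Var(H) − 𝔼[(H − λG)²] + 𝔼[(H − λG)²/π(X)]`, provided
`𝔼[(H − λG)²/π(X)] < ∞`. -/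
theorem stmt_5
    {Ω 𝒳 : Type*} [MeasurableSpace Ω] [MeasurableSpace 𝒳]
    (μ : Measure Ω) [IsProbabilityMeasure μ]
    (X : Ω → 𝒳) (hX : Measurable X)
    (G H : Ω → ℝ) (hGm : Measurable G) (hHm : Measurable H)
    (hG : MemLp G 2 μ) (hH : MemLp H 2 μ)
    (π : 𝒳 → ℝ) (hπm : Measurable π) (hπ : ∀ x, π x ∈ Set.Ioc (0 : ℝ) 1)
    (ξ : Ω → ℝ) (hξm : Measurable ξ) (hξ01 : ∀ ω, ξ ω = 0 ∨ ξ ω = 1)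
    (hcond : μ[ξ | MeasurableSpace.comap (fun ω => (X ω, G ω, H ω)) inferInstance]
      =ᵐ[μ] fun ω => π (X ω))
    (lam : ℝ)
    (hint : Integrable (fun ω => (H ω - lam * G ω) ^ 2 / π (X ω)) μ) :
    (∫ ω, (lam * G ω + (H ω - lam * G ω) * ξ ω / π (X ω)) ∂μ = ∫ ω, H ω ∂μ) ∧
    variance (fun ω => lam * G ω + (H ω - lam * G ω) * ξ ω / π (X ω)) μ =
      variance H μ - ∫ ω, (H ω - lam * G ω) ^ 2 ∂μ
        + ∫ ω, (H ω - lam * G ω) ^ 2 / π (X ω) ∂μ := by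
  have hTm : Measurable fun ω => (X ω, G ω, H ω) := hX.prodMk (hGm.prodMk hHm)
  have hm := hTm.comap_le
  have hmT : @Measurable Ω (𝒳 × ℝ × ℝ)
      (MeasurableSpace.comap (fun ω => (X ω, G ω, H ω)) inferInstance) _
      (fun ω => (X ω, G ω, H ω)) := Measurable.of_comap_le le_rfl
  have hcomp : ∀ {F : 𝒳 × ℝ × ℝ → ℝ}, Measurable F →
      @Measurable Ω ℝ (MeasurableSpace.comap (fun ω => (X ω, G ω, H ω)) inferInstance) _
      (fun ω => F (X ω, G ω, H ω)) := fun hF => hF.comp hmT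
  have hFD : Measurable fun q : 𝒳 × ℝ × ℝ => q.2.2 - lam * q.2.1 :=
    measurable_snd.snd.sub (measurable_const.mul measurable_snd.fst)
  have hFp : Measurable fun q : 𝒳 × ℝ × ℝ => π q.1 := hπm.comp measurable_fst
  have hDm : Measurable fun ω => H ω - lam * G ω := hHm.sub (measurable_const.mul hGm)
  have hpm : Measurable fun ω => π (X ω) := hπm.comp hX
  have hp0 : ∀ ω, (0:ℝ) ≤ π (X ω) := fun ω => (hπ (X ω)).1.le
  have hξint : Integrable ξ μ :=
    (integrable_const (1:ℝ)).mono' hξm.aestronglyMeasurable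
      (ae_of_all _ fun ω => by rcases hξ01 ω with h | h <;> simp [h])
  -- basic integrability
  have hGint : Integrable G μ := hG.integrable one_le_two
  have hHint : Integrable H μ := hH.integrable one_le_two
  have hG2int : Integrable (fun ω => G ω ^ 2) μ := hG.integrable_sq
  have hDL2 : MemLp (fun ω => H ω - lam * G ω) 2 μ := hH.sub (hG.const_mul lam)
  have hD2int : Integrable (fun ω => (H ω - lam * G ω) ^ 2) μ := hDL2.integrable_sq
  have hDint : Integrable (fun ω => H ω - lam * G ω) μ := hDL2.integrable one_le_two
  have hGDint : Integrable (fun ω => G ω * (H ω - lam * G ω)) μ := by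
    refine ((hG2int.add hD2int).div_const 2).mono'
      (hGm.mul hDm).aestronglyMeasurable (ae_of_all _ fun ω => ?_)
    rw [Real.norm_eq_abs, abs_le]
    simp only [Pi.add_apply]
    constructor <;> nlinarith [sq_nonneg (G ω + (H ω - lam * G ω)),
      sq_nonneg (G ω - (H ω - lam * G ω))]
  -- pull-out applications
  have habs := stmt5_pullout_nonneg hm hξm hξ01 hcond hpm hp0
    (hcomp (hFD.abs.fun_div hFp)) (fun ω => div_nonneg (abs_nonneg _) (hp0 ω))
    (hDint.abs.congr (ae_of_all _ fun ω => (div_mul_cancel₀ _ (hπ (X ω)).1.ne').symm))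
  have hG2ξ := stmt5_pullout_nonneg hm hξm hξ01 hcond hpm hp0
    (hcomp ((measurable_snd.fst.pow_const 2).fun_div hFp))
    (fun ω => div_nonneg (sq_nonneg _) (hp0 ω))
    (hG2int.congr (ae_of_all _ fun ω => (div_mul_cancel₀ _ (hπ (X ω)).1.ne').symm))
  have hD2ξ := stmt5_pullout_nonneg hm hξm hξ01 hcond hpm hp0
    (hcomp ((hFD.pow_const 2).fun_div hFp))
    (fun ω => div_nonneg (sq_nonneg _) (hp0 ω))
    (hD2int.congr (ae_of_all _ fun ω => (div_mul_cancel₀ _ (hπ (X ω)).1.ne').symm))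
  have hD2p2ξ := stmt5_pullout_nonneg hm hξm hξ01 hcond hpm hp0
    (hcomp ((hFD.pow_const 2).fun_div (hFp.pow_const 2)))
    (fun ω => div_nonneg (sq_nonneg _) (sq_nonneg _))
    (hint.congr (ae_of_all _ fun ω => by
      have h := (hπ (X ω)).1.ne'
      field_simp))
  have hDξp_int : Integrable (fun ω => (H ω - lam * G ω) * ξ ω / π (X ω)) μ := by
    refine habs.1.mono' ((hDm.mul hξm).div hpm).aestronglyMeasurable
      (ae_of_all _ fun ω => ?_)
    rcases hξ01 ω with h | h <;>
      simp [h, Real.norm_eq_abs, abs_div, abs_of_pos (hπ (X ω)).1, le_refl,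
        div_nonneg, abs_nonneg, (hπ (X ω)).1.le]
  -- the mean
  have hmean2 : ∫ ω, (H ω - lam * G ω) * ξ ω / π (X ω) ∂μ
      = ∫ ω, (H ω - lam * G ω) ∂μ := by
    have h1 : ∫ ω, (H ω - lam * G ω) * ξ ω / π (X ω) ∂μ
        = ∫ ω, ((H ω - lam * G ω) / π (X ω)) * ξ ω ∂μ :=
      integral_congr_ae (ae_of_all _ fun ω => by ring)
    rw [h1, stmt5_pullout hm hξint hcond
      ((hcomp (hFD.fun_div hFp)).stronglyMeasurable)
      (hDξp_int.congr (ae_of_all _ fun ω => by ring))]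
    exact integral_congr_ae (ae_of_all _ fun ω => div_mul_cancel₀ _ (hπ (X ω)).1.ne')
  have hmean : ∫ ω, (lam * G ω + (H ω - lam * G ω) * ξ ω / π (X ω)) ∂μ = ∫ ω, H ω ∂μ := by
    rw [integral_add (hGint.const_mul lam) hDξp_int, hmean2, integral_const_mul,
      integral_sub hHint (hGint.const_mul lam), integral_const_mul]
    ring
  -- cross-term integrability
  have hGDξp_int : Integrable (fun ω => G ω * (H ω - lam * G ω) * ξ ω / π (X ω)) μ := by
    refine ((hG2ξ.1.add hD2ξ.1).div_const 2).mono'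
      (((hGm.mul hDm).mul hξm).div hpm).aestronglyMeasurable
      (ae_of_all _ fun ω => ?_)
    show ‖G ω * (H ω - lam * G ω) * ξ ω / π (X ω)‖
      ≤ (G ω ^ 2 / π (X ω) * ξ ω + (H ω - lam * G ω) ^ 2 / π (X ω) * ξ ω) / 2
    have hp := (hπ (X ω)).1
    rcases hξ01 ω with h | h
    · simp [h]
    · simp only [h, mul_one]
      rw [Real.norm_eq_abs, abs_div, abs_of_pos hp]
      have h2 : |G ω * (H ω - lam * G ω)| ≤ (G ω ^ 2 + (H ω - lam * G ω) ^ 2) / 2 := by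
        rw [abs_le]
        constructor <;> nlinarith [sq_nonneg (G ω + (H ω - lam * G ω)),
          sq_nonneg (G ω - (H ω - lam * G ω))]
      calc |G ω * (H ω - lam * G ω)| / π (X ω)
          ≤ ((G ω ^ 2 + (H ω - lam * G ω) ^ 2) / 2) / π (X ω) := by gcongr
        _ = (G ω ^ 2 / π (X ω) + (H ω - lam * G ω) ^ 2 / π (X ω)) / 2 := by ring
  -- expansion of the square
  have hΔ2_eq : ∀ ω, (lam * G ω + (H ω - lam * G ω) * ξ ω / π (X ω)) ^ 2
      = lam ^ 2 * G ω ^ 2 + 2 * lam * (G ω * (H ω - lam * G ω) * ξ ω / π (X ω))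
        + ((H ω - lam * G ω) ^ 2 / π (X ω) ^ 2) * ξ ω := by
    intro ω
    have hp := (hπ (X ω)).1.ne'
    rcases hξ01 ω with h | h <;> rw [h] <;> field_simp <;> ring
  have hΔm : Measurable (fun ω => lam * G ω + (H ω - lam * G ω) * ξ ω / π (X ω)) :=
    (measurable_const.mul hGm).add ((hDm.mul hξm).div hpm)
  have hΔ2int : Integrable
      (fun ω => (lam * G ω + (H ω - lam * G ω) * ξ ω / π (X ω)) ^ 2) μ :=
    (((hG2int.const_mul (lam ^ 2)).add (hGDξp_int.const_mul (2 * lam))).add hD2p2ξ.1).congr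
      (ae_of_all _ fun ω => (hΔ2_eq ω).symm)
  have hΔL2 : MemLp (fun ω => lam * G ω + (H ω - lam * G ω) * ξ ω / π (X ω)) 2 μ :=
    (memLp_two_iff_integrable_sq hΔm.aestronglyMeasurable).mpr hΔ2int
  -- integrals of the pieces
  have hcross : ∫ ω, G ω * (H ω - lam * G ω) * ξ ω / π (X ω) ∂μ
      = ∫ ω, G ω * (H ω - lam * G ω) ∂μ := by
    have h1 : ∫ ω, G ω * (H ω - lam * G ω) * ξ ω / π (X ω) ∂μ
        = ∫ ω, (G ω * (H ω - lam * G ω) / π (X ω)) * ξ ω ∂μ :=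
      integral_congr_ae (ae_of_all _ fun ω => by ring)
    rw [h1, stmt5_pullout hm hξint hcond
      ((hcomp ((measurable_snd.fst.fun_mul hFD).fun_div hFp)).stronglyMeasurable)
      (hGDξp_int.congr (ae_of_all _ fun ω => by ring))]
    exact integral_congr_ae (ae_of_all _ fun ω => div_mul_cancel₀ _ (hπ (X ω)).1.ne')
  have hD2term : ∫ ω, ((H ω - lam * G ω) ^ 2 / π (X ω) ^ 2) * ξ ω ∂μ
      = ∫ ω, (H ω - lam * G ω) ^ 2 / π (X ω) ∂μ := by
    rw [hD2p2ξ.2]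
    refine integral_congr_ae (ae_of_all _ fun ω => ?_)
    have h := (hπ (X ω)).1.ne'
    field_simp
  have hEΔ2 : ∫ ω, (lam * G ω + (H ω - lam * G ω) * ξ ω / π (X ω)) ^ 2 ∂μ
      = lam ^ 2 * ∫ ω, G ω ^ 2 ∂μ + 2 * lam * ∫ ω, G ω * (H ω - lam * G ω) ∂μ
        + ∫ ω, (H ω - lam * G ω) ^ 2 / π (X ω) ∂μ := by
    have h1 : Integrable (fun ω => lam ^ 2 * G ω ^ 2
        + 2 * lam * (G ω * (H ω - lam * G ω) * ξ ω / π (X ω))) μ :=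
      (hG2int.const_mul _).add (hGDξp_int.const_mul _)
    rw [integral_congr_ae (ae_of_all _ hΔ2_eq),
      integral_add h1 hD2p2ξ.1,
      integral_add (hG2int.const_mul _) (hGDξp_int.const_mul _),
      integral_const_mul, integral_const_mul, hcross, hD2term]
  have hEH2 : ∫ ω, H ω ^ 2 ∂μ
      = lam ^ 2 * ∫ ω, G ω ^ 2 ∂μ + 2 * lam * ∫ ω, G ω * (H ω - lam * G ω) ∂μ
        + ∫ ω, (H ω - lam * G ω) ^ 2 ∂μ := by
    have h0 : ∀ ω, H ω ^ 2 = lam ^ 2 * G ω ^ 2 + 2 * lam * (G ω * (H ω - lam * G ω))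
        + (H ω - lam * G ω) ^ 2 := fun ω => by ring
    have h1 : Integrable (fun ω => lam ^ 2 * G ω ^ 2
        + 2 * lam * (G ω * (H ω - lam * G ω))) μ :=
      (hG2int.const_mul _).add (hGDint.const_mul _)
    rw [integral_congr_ae (ae_of_all _ h0),
      integral_add h1 hD2int,
      integral_add (hG2int.const_mul _) (hGDint.const_mul _),
      integral_const_mul, integral_const_mul]
  refine ⟨hmean, ?_⟩
  rw [variance_eq_sub hΔL2, variance_eq_sub hH]
  simp only [Pi.pow_apply]
  rw [hEΔ2, hEH2, hmean]
  ring
end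

section
/- Assume 𝒳 is a finite set, ℙ(X = x) > 0 for every x ∈ 𝒳, M is a nonnegative integrable real random variable with u(x) = 𝔼[M | X = x] > 0 for every x ∈ 𝒳, and c_h > 0, c_g > 0, C > 0 are constants. Then the function π ↦ (c_h·𝔼[π(X)] + c_g)·(𝔼[M/π(X)] + C), defined on the class of all functions π : 𝒳 → (0, ∞), attains its minimum at π*(x) = √( (c_g/c_h) · u(x)/C ). -/
open MeasureTheory ProbabilityTheory

lemma key_sum {Ω 𝒳 : Type*} [MeasurableSpace Ω] [Fintype 𝒳] [MeasurableSpace 𝒳]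
    [MeasurableSingletonClass 𝒳] (μ : Measure Ω)
    (X : Ω → 𝒳) (hX : Measurable X)
    (h : Ω → ℝ) (hint : Integrable h μ) (c : 𝒳 → ℝ) :
    ∫ ω, c (X ω) * h ω ∂μ = ∑ x, c x * ∫ ω in X ⁻¹' {x}, h ω ∂μ := by
  have hmeas : ∀ x : 𝒳, MeasurableSet (X ⁻¹' {x}) := fun x => hX (measurableSet_singleton x)
  have heq : (fun ω => c (X ω) * h ω) =
      fun ω => ∑ x, (X ⁻¹' {x}).indicator (fun ω => c x * h ω) ω := by
    funext ω
    rw [Finset.sum_eq_single (X ω)]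
    · simp
    · intro x _ hx
      apply Set.indicator_of_notMem
      simp [Ne.symm hx]
    · simp
  rw [heq, integral_finset_sum]
  · refine Finset.sum_congr rfl fun x _ => ?_
    rw [integral_indicator (hmeas x), integral_const_mul]
  · intro x _
    exact (hint.const_mul (c x)).indicator (hmeas x)

set_option maxHeartbeats 1000000 in
/-- With `𝒳` finite, `ℙ(X = x) > 0` for all `x`, `M ≥ 0` integrable with
conditional means `u(x) = 𝔼[M | X = x] > 0`, and constants `c_h, c_g, C > 0`, the objective
`π ↦ (c_h·𝔼[π(X)] + c_g)·(𝔼[M/π(X)] + C)` over all `π : 𝒳 → (0, ∞)` attains its minimum at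
`π*(x) = √((c_g/c_h)·u(x)/C)`. -/
theorem stmt_9
    {Ω 𝒳 : Type*} [MeasurableSpace Ω] [Fintype 𝒳] [MeasurableSpace 𝒳]
    [MeasurableSingletonClass 𝒳]
    (μ : Measure Ω) [IsProbabilityMeasure μ]
    (X : Ω → 𝒳) (hX : Measurable X) (hXpos : ∀ x, 0 < μ (X ⁻¹' {x}))
    (M : Ω → ℝ) (hMm : Measurable M) (hM0 : ∀ ω, 0 ≤ M ω) (hMint : Integrable M μ)
    (u : 𝒳 → ℝ)
    (hu : ∀ x, u x = (∫ ω in X ⁻¹' {x}, M ω ∂μ) / (μ (X ⁻¹' {x})).toReal)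
    (hupos : ∀ x, 0 < u x)
    (c_h c_g C : ℝ) (hch : 0 < c_h) (hcg : 0 < c_g) (hC : 0 < C)
    (obj : (𝒳 → ℝ) → ℝ)
    (hobj : ∀ π : 𝒳 → ℝ,
      obj π = (c_h * ∫ ω, π (X ω) ∂μ + c_g) * ((∫ ω, M ω / π (X ω) ∂μ) + C)) :
    ∀ π : 𝒳 → ℝ, (∀ x, 0 < π x) →
      obj (fun x => Real.sqrt (c_g / c_h * u x / C)) ≤ obj π := by
  intro π hπ
  set p : 𝒳 → ℝ := fun x => (μ (X ⁻¹' {x})).toReal with hp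
  have hppos : ∀ x, 0 < p x := fun x =>
    ENNReal.toReal_pos (hXpos x).ne' (measure_ne_top μ _)
  set v : 𝒳 → ℝ := fun x => ∫ ω in X ⁻¹' {x}, M ω ∂μ with hv
  have hvu : ∀ x, v x = u x * p x := by
    intro x
    rw [hu x]
    show v x = v x / p x * p x
    rw [div_mul_cancel₀ _ (hppos x).ne']
  -- integral formulas
  have hI1 : ∀ π' : 𝒳 → ℝ, ∫ ω, π' (X ω) ∂μ = ∑ x, p x * π' x := by
    intro π'
    have := key_sum μ X hX (fun _ => (1 : ℝ)) (integrable_const 1) π'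
    simp only [mul_one] at this
    rw [this]
    refine Finset.sum_congr rfl fun x _ => ?_
    rw [setIntegral_const]
    simp [mul_comm]
    exact Or.inl rfl
  have hI2 : ∀ π' : 𝒳 → ℝ, ∫ ω, M ω / π' (X ω) ∂μ = ∑ x, v x / π' x := by
    intro π'
    calc ∫ ω, M ω / π' (X ω) ∂μ = ∫ ω, (π' (X ω))⁻¹ * M ω ∂μ := by
          congr 1; funext ω; rw [inv_mul_eq_div]
      _ = ∑ x, (π' x)⁻¹ * v x := key_sum μ X hX M hMint (fun x => (π' x)⁻¹)
      _ = ∑ x, v x / π' x := by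
          refine Finset.sum_congr rfl fun x _ => ?_; rw [inv_mul_eq_div]
  rw [hobj, hobj]
  simp only [hI1 π, hI2 π, hI1 (fun x => Real.sqrt (c_g / c_h * u x / C)),
    hI2 (fun x => Real.sqrt (c_g / c_h * u x / C))]
  set S : ℝ := ∑ x, p x * Real.sqrt (u x) with hS
  have hSnn : 0 ≤ S :=
    Finset.sum_nonneg fun x _ => mul_nonneg (hppos x).le (Real.sqrt_nonneg _)
  set s1 : ℝ := Real.sqrt c_h with hs1
  set s2 : ℝ := Real.sqrt c_g with hs2
  set s3 : ℝ := Real.sqrt C with hs3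
  set K : ℝ := Real.sqrt (c_g * C) with hK
  have hs1sq : s1 ^ 2 = c_h := Real.sq_sqrt hch.le
  have hs2sq : s2 ^ 2 = c_g := Real.sq_sqrt hcg.le
  have hs3sq : s3 ^ 2 = C := Real.sq_sqrt hC.le
  have hKsq : K ^ 2 = c_g * C := Real.sq_sqrt (mul_nonneg hcg.le hC.le)
  have hs1pos : 0 < s1 := Real.sqrt_pos.mpr hch
  have hs2pos : 0 < s2 := Real.sqrt_pos.mpr hcg
  have hs3pos : 0 < s3 := Real.sqrt_pos.mpr hC
  have hKnn : 0 ≤ K := Real.sqrt_nonneg _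
  have hKe : K = s2 * s3 := Real.sqrt_mul hcg.le C
  -- value at π*
  have hopt : (c_h * ∑ x, p x * Real.sqrt (c_g / c_h * u x / C) + c_g) *
      ((∑ x, v x / Real.sqrt (c_g / c_h * u x / C)) + C) = (s1 * S + K) ^ 2 := by
    have e1 : ∀ x : 𝒳, Real.sqrt (c_g / c_h * u x / C)
        = Real.sqrt (c_g / (c_h * C)) * Real.sqrt (u x) := by
      intro x
      rw [← Real.sqrt_mul (by positivity)]
      congr 1; field_simp; try ring
    have hq : (0:ℝ) < Real.sqrt (c_g / (c_h * C)) := Real.sqrt_pos.mpr (by positivity)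
    have hqe : Real.sqrt (c_g / (c_h * C)) = s2 / (s1 * s3) := by
      rw [hs1, hs2, hs3, ← Real.sqrt_mul hch.le, ← Real.sqrt_div hcg.le]
    have e2 : (∑ x, p x * Real.sqrt (c_g / c_h * u x / C))
        = Real.sqrt (c_g / (c_h * C)) * S := by
      rw [hS, Finset.mul_sum]
      exact Finset.sum_congr rfl fun x _ => by rw [e1 x]; ring
    have e3 : (∑ x, v x / Real.sqrt (c_g / c_h * u x / C))
        = (1 / Real.sqrt (c_g / (c_h * C))) * S := by
      rw [hS, Finset.mul_sum]
      refine Finset.sum_congr rfl fun x _ => ?_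
      rw [e1 x]
      have huspos : 0 < Real.sqrt (u x) := Real.sqrt_pos.mpr (hupos x)
      rw [div_eq_iff (by positivity), hvu x, ← Real.mul_self_sqrt (hupos x).le]
      field_simp
      rw [Real.sqrt_sq huspos.le]; ring
    rw [e2, e3, hqe, hKe, ← hs1sq, ← hs2sq, ← hs3sq]
    field_simp
  rw [hopt]
  -- lower bound for general π
  set A : ℝ := ∑ x, p x * π x with hA
  set B : ℝ := ∑ x, v x / π x with hB
  have hAnn : 0 ≤ A := Finset.sum_nonneg fun x _ => mul_nonneg (hppos x).le (hπ x).le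
  have hBnn : 0 ≤ B := Finset.sum_nonneg fun x _ => by
    rw [hvu x]
    exact div_nonneg (mul_nonneg (hupos x).le (hppos x).le) (hπ x).le
  have hCS : S ^ 2 ≤ A * B := by
    have h1 : S = ∑ x, Real.sqrt (p x * π x) * Real.sqrt (v x / π x) := by
      refine Finset.sum_congr rfl fun x _ => ?_
      rw [← Real.sqrt_mul (mul_nonneg (hppos x).le (hπ x).le)]
      have hx : p x * π x * (v x / π x) = (p x) ^ 2 * u x := by
        rw [hvu x]; field_simp [(hπ x).ne']; try ring
      rw [hx, Real.sqrt_mul (sq_nonneg _), Real.sqrt_sq (hppos x).le]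
    have h2 := Finset.sum_mul_sq_le_sq_mul_sq Finset.univ
      (fun x => Real.sqrt (p x * π x)) (fun x => Real.sqrt (v x / π x))
    rw [h1]
    calc (∑ x, Real.sqrt (p x * π x) * Real.sqrt (v x / π x)) ^ 2
        ≤ (∑ x, Real.sqrt (p x * π x) ^ 2) * ∑ x, Real.sqrt (v x / π x) ^ 2 := h2
      _ = A * B := by
          congr 1
          · exact Finset.sum_congr rfl fun x _ =>
              Real.sq_sqrt (mul_nonneg (hppos x).le (hπ x).le)
          · refine Finset.sum_congr rfl fun x _ => Real.sq_sqrt ?_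
            rw [hvu x]
            exact div_nonneg (mul_nonneg (hupos x).le (hppos x).le) (hπ x).le
  have hsqAB : S ≤ Real.sqrt (A * B) := by
    rw [← Real.sqrt_sq hSnn]
    exact Real.sqrt_le_sqrt hCS
  have amgm : 2 * (s1 * K * Real.sqrt (A * B)) ≤ c_h * C * A + c_g * B := by
    have hx : (0:ℝ) ≤ c_h * C * A := mul_nonneg (mul_nonneg hch.le hC.le) hAnn
    have hy : (0:ℝ) ≤ c_g * B := mul_nonneg hcg.le hBnn
    have hprod : Real.sqrt (c_h * C * A) * Real.sqrt (c_g * B)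
        = s1 * K * Real.sqrt (A * B) := by
      rw [← Real.sqrt_mul hx]
      have : c_h * C * A * (c_g * B) = c_h * ((c_g * C) * (A * B)) := by ring
      rw [this, Real.sqrt_mul hch.le, Real.sqrt_mul (mul_nonneg hcg.le hC.le)]
      rw [← hs1, ← hK]; ring
    nlinarith [sq_nonneg (Real.sqrt (c_h * C * A) - Real.sqrt (c_g * B)),
      Real.sq_sqrt hx, Real.sq_sqrt hy, hprod]
  have hABnn : 0 ≤ Real.sqrt (A * B) := Real.sqrt_nonneg _
  nlinarith [hCS, hsqAB, amgm, hs1sq, hKsq, hSnn, hAnn, hBnn,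
    mul_le_mul_of_nonneg_left hsqAB
      (mul_nonneg (mul_nonneg (by norm_num : (0:ℝ) ≤ 2) hs1pos.le) hKnn)]
end

section
/- Let 𝒳 be a finite set, let Q and P be probability mass functions on 𝒳 with Q(x) > 0 for all x, and let (X, G, H, ξ) be random variables where X has law Q, G and H are square-integrable real ratings, π : 𝒳 → (0,1] is an annotation policy, and ξ is conditionally Bernoulli(π(X)) given (X, G, H). Set r(x) = P(x)/Q(x), θ* = Σ_{x ∈ 𝒳} P(x)·𝔼[H | X = x], and Δ = r(X)·(G + (H − G)·ξ/π(X)). Then 𝔼[Δ] = θ*, and Var(Δ) = Σ_{x ∈ 𝒳} P(x)·r(x)·𝔼[ H² + (1/π(x) − 1)(H − G)² | X = x ] − (θ*)². -/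
open MeasureTheory ProbabilityTheory

/-- Importance-weighted active increment. Inputs `X` drawn from a strictly
positive pmf `Q` on a finite set `𝒳`, target pmf `P`, square-integrable ratings `G, H`,
policy `π : 𝒳 → (0,1]`, `ξ` conditionally Bernoulli(`π(X)`) given `(X, G, H)`,
`r(x) = P(x)/Q(x)`, `θ* = Σ_x P(x)·𝔼[H | X = x]`, and
`Δ = r(X)·(G + (H − G)·ξ/π(X))`. Then `𝔼[Δ] = θ*` and
`Var(Δ) = Σ_x P(x)·r(x)·𝔼[H² + (1/π(x) − 1)(H − G)² | X = x] − (θ*)²`. -/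
theorem stmt_11
    {Ω 𝒳 : Type*} [MeasurableSpace Ω] [Fintype 𝒳] [MeasurableSpace 𝒳]
    [MeasurableSingletonClass 𝒳]
    (μ : Measure Ω) [IsProbabilityMeasure μ]
    (Q P : 𝒳 → ℝ) (hQpos : ∀ x, 0 < Q x) (hQsum : ∑ x, Q x = 1)
    (hPpos : ∀ x, 0 ≤ P x) (hPsum : ∑ x, P x = 1)
    (X : Ω → 𝒳) (hX : Measurable X) (hlaw : ∀ x, (μ (X ⁻¹' {x})).toReal = Q x)
    (G H : Ω → ℝ) (hGm : Measurable G) (hHm : Measurable H)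
    (hG : MemLp G 2 μ) (hH : MemLp H 2 μ)
    (π : 𝒳 → ℝ) (hπ : ∀ x, π x ∈ Set.Ioc (0 : ℝ) 1)
    (ξ : Ω → ℝ) (hξm : Measurable ξ) (hξ01 : ∀ ω, ξ ω = 0 ∨ ξ ω = 1)
    (hcond : μ[ξ | MeasurableSpace.comap (fun ω => (X ω, G ω, H ω)) inferInstance]
      =ᵐ[μ] fun ω => π (X ω))
    (r : 𝒳 → ℝ) (hr : ∀ x, r x = P x / Q x)
    (condM : (Ω → ℝ) → 𝒳 → ℝ)
    (hcondM : ∀ f x, condM f x = (∫ ω in X ⁻¹' {x}, f ω ∂μ) / (μ (X ⁻¹' {x})).toReal)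
    (θstar : ℝ) (hθ : θstar = ∑ x, P x * condM H x)
    (Δ : Ω → ℝ)
    (hΔ : ∀ ω, Δ ω = r (X ω) * (G ω + (H ω - G ω) * ξ ω / π (X ω))) :
    (∫ ω, Δ ω ∂μ = θstar) ∧
      variance Δ μ =
        (∑ x, P x * r x *
          condM (fun ω => (H ω) ^ 2 + (1 / π x - 1) * (H ω - G ω) ^ 2) x) - θstar ^ 2 := by
  classical
  have πpos : ∀ x, 0 < π x := fun x => (hπ x).1
  have πne : ∀ x, π x ≠ 0 := fun x => (πpos x).ne'
  have Qne : ∀ x, Q x ≠ 0 := fun x => (hQpos x).ne'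
  -- the sub-σ-algebra
  have hhm : Measurable (fun ω => (X ω, G ω, H ω)) := hX.prodMk (hGm.prodMk hHm)
  have hhm' : Measurable[MeasurableSpace.comap (fun ω => (X ω, G ω, H ω)) inferInstance]
      (fun ω => (X ω, G ω, H ω)) := Measurable.of_comap_le le_rfl
  have hXm : Measurable[MeasurableSpace.comap (fun ω => (X ω, G ω, H ω)) inferInstance] X :=
    measurable_fst.comp hhm'
  have hGm' : Measurable[MeasurableSpace.comap (fun ω => (X ω, G ω, H ω)) inferInstance] G :=
    measurable_fst.comp (measurable_snd.comp hhm')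
  have hHm' : Measurable[MeasurableSpace.comap (fun ω => (X ω, G ω, H ω)) inferInstance] H :=
    measurable_snd.comp (measurable_snd.comp hhm')
  -- bounds on ξ
  have hξb : ∀ ω, ‖ξ ω‖ ≤ 1 := by
    intro ω; rcases hξ01 ω with h0 | h0 <;> simp [h0]
  have hξi : Integrable ξ μ :=
    (integrable_const (1 : ℝ)).mono' hξm.aestronglyMeasurable
      (Filter.Eventually.of_forall fun ω => by simpa using hξb ω)
  -- integrable functions
  have hGint : Integrable G μ := hG.integrable one_le_two
  have hHint : Integrable H μ := hH.integrable one_le_two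
  have hmul2 : ∀ f g : Ω → ℝ, MemLp f 2 μ → MemLp g 2 μ →
      Integrable (fun ω => f ω * g ω) μ := by
    intro f g hf hg
    have h1 := (hf.add hg).integrable_sq
    have h2 := hf.integrable_sq
    have h3 := hg.integrable_sq
    have heq : (fun ω => f ω * g ω)
        = fun ω => ((f ω + g ω) ^ 2 - f ω ^ 2 - g ω ^ 2) / 2 := by
      funext ω; ring
    rw [heq]
    exact ((h1.sub h2).sub h3).div_const 2
  -- multiplying by a bounded function of X preserves integrability
  have hbdd : ∀ (c : 𝒳 → ℝ) (ψ : Ω → ℝ), Integrable ψ μ →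
      Integrable (fun ω => c (X ω) * ψ ω) μ := by
    intro c ψ hψ
    refine hψ.bdd_mul ((measurable_of_countable c).comp hX).aestronglyMeasurable
      (c := ∑ x, |c x|) (Filter.Eventually.of_forall fun ω => ?_)
    rw [Real.norm_eq_abs]
    exact Finset.single_le_sum (f := fun x => |c x|) (fun i _ => abs_nonneg _)
      (Finset.mem_univ (X ω))
  have hmulξ : ∀ ψ : Ω → ℝ, Integrable ψ μ → Integrable (fun ω => ψ ω * ξ ω) μ := by
    intro ψ hψ
    have h1 : Integrable (fun ω => ξ ω * ψ ω) μ :=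
      hψ.bdd_mul hξm.aestronglyMeasurable (Filter.Eventually.of_forall hξb)
    have heq : (fun ω => ψ ω * ξ ω) = fun ω => ξ ω * ψ ω := funext fun ω => mul_comm _ _
    rw [heq]; exact h1
  -- substitution lemma : replace ξ by π(X)
  have hsub : ∀ φ : Ω → ℝ,
      Measurable[MeasurableSpace.comap (fun ω => (X ω, G ω, H ω)) inferInstance] φ →
      Integrable φ μ →
      ∫ ω, φ ω * ξ ω ∂μ = ∫ ω, φ ω * π (X ω) ∂μ := by
    intro φ hφm hφi
    have hφξ : Integrable (φ * ξ) μ := hmulξ φ hφi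
    have hce : μ[φ * ξ | MeasurableSpace.comap (fun ω => (X ω, G ω, H ω)) inferInstance]
        =ᵐ[μ] φ * μ[ξ | MeasurableSpace.comap (fun ω => (X ω, G ω, H ω)) inferInstance] :=
      condExp_mul_of_stronglyMeasurable_left hφm.stronglyMeasurable hφξ hξi
    have hce2 : μ[φ * ξ | MeasurableSpace.comap (fun ω => (X ω, G ω, H ω)) inferInstance]
        =ᵐ[μ] fun ω => φ ω * π (X ω) := by
      refine hce.trans ?_
      filter_upwards [hcond] with ω hω
      simp only [Pi.mul_apply, hω]
    calc ∫ ω, φ ω * ξ ω ∂μ = ∫ ω, (φ * ξ) ω ∂μ := rfl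
      _ = ∫ ω, (μ[φ * ξ | MeasurableSpace.comap (fun ω => (X ω, G ω, H ω)) inferInstance]) ω ∂μ :=
          (integral_condExp hhm.comap_le).symm
      _ = ∫ ω, φ ω * π (X ω) ∂μ := integral_congr_ae hce2
  -- measurability of the preimages
  have hpre : ∀ x : 𝒳, MeasurableSet (X ⁻¹' {x}) := fun x => hX (measurableSet_singleton x)
  -- layering lemma
  have hlayer : ∀ φ : Ω → ℝ, Integrable φ μ →
      ∫ ω, φ ω ∂μ = ∑ x, ∫ ω in X ⁻¹' {x}, φ ω ∂μ := by
    intro φ hφ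
    have hptw : ∀ ω, φ ω = ∑ x, (X ⁻¹' {x}).indicator φ ω := by
      intro ω
      rw [Finset.sum_eq_single (X ω)]
      · rw [Set.indicator_of_mem (by simp : ω ∈ X ⁻¹' {X ω})]
      · intro b _ hb
        exact Set.indicator_of_notMem (by simpa using hb.symm) φ
      · simp
    calc ∫ ω, φ ω ∂μ = ∫ ω, ∑ x, (X ⁻¹' {x}).indicator φ ω ∂μ :=
          integral_congr_ae (Filter.Eventually.of_forall hptw)
      _ = ∑ x, ∫ ω, (X ⁻¹' {x}).indicator φ ω ∂μ :=
          integral_finset_sum _ fun x _ => hφ.indicator (hpre x)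
      _ = ∑ x, ∫ ω in X ⁻¹' {x}, φ ω ∂μ :=
          Finset.sum_congr rfl fun x _ => integral_indicator (hpre x)
  -- set integrals vs condM
  have hQx : ∀ (f : Ω → ℝ) (x : 𝒳), ∫ ω in X ⁻¹' {x}, f ω ∂μ = Q x * condM f x := by
    intro f x
    rw [hcondM, hlaw, eq_comm, mul_comm, div_mul_cancel₀ _ (Qne x)]
  -- pull out a function of X from a set integral
  have hconst : ∀ (c : 𝒳 → ℝ) (ψ : Ω → ℝ) (x : 𝒳),
      ∫ ω in X ⁻¹' {x}, c (X ω) * ψ ω ∂μ = c x * ∫ ω in X ⁻¹' {x}, ψ ω ∂μ := by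
    intro c ψ x
    rw [← integral_const_mul]
    refine setIntegral_congr_fun (hpre x) fun ω hω => ?_
    have : X ω = x := hω
    rw [this]
  ------------------------------------------------------------------
  -- the mean
  ------------------------------------------------------------------
  set φ₁ : Ω → ℝ := fun ω => (r (X ω) / π (X ω)) * (H ω - G ω) with hφ₁def
  have hφ₁i : Integrable φ₁ μ := hbdd (fun x => r x / π x) _ (hHint.sub hGint)
  have hφ₁m : Measurable[MeasurableSpace.comap (fun ω => (X ω, G ω, H ω)) inferInstance] φ₁ :=
    (((measurable_of_countable fun x => r x / π x).comp hXm)).mul (hHm'.sub hGm')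
  have hΔdec : ∀ ω, Δ ω = r (X ω) * G ω + φ₁ ω * ξ ω := by
    intro ω
    rw [hΔ ω]
    simp only [hφ₁def]
    field_simp
  have hrG : Integrable (fun ω => r (X ω) * G ω) μ := hbdd r G hGint
  have hrH : Integrable (fun ω => r (X ω) * H ω) μ := hbdd r H hHint
  have hmean : ∫ ω, Δ ω ∂μ = θstar := by
    have step1 : ∫ ω, Δ ω ∂μ
        = (∫ ω, r (X ω) * G ω ∂μ) + ∫ ω, φ₁ ω * ξ ω ∂μ := by
      rw [← integral_add hrG (hmulξ φ₁ hφ₁i)]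
      exact integral_congr_ae (Filter.Eventually.of_forall fun ω => hΔdec ω)
    have step2 : ∫ ω, φ₁ ω * ξ ω ∂μ = ∫ ω, r (X ω) * (H ω - G ω) ∂μ := by
      rw [hsub φ₁ hφ₁m hφ₁i]
      refine integral_congr_ae (Filter.Eventually.of_forall fun ω => ?_)
      simp only [hφ₁def]
      field_simp
      have := πne (X ω); field_simp
    have step3 : ∫ ω, Δ ω ∂μ = ∫ ω, r (X ω) * H ω ∂μ := by
      rw [step1, step2,
        ← integral_add hrG (hbdd r (fun ω => H ω - G ω) (hHint.sub hGint))]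
      refine integral_congr_ae (Filter.Eventually.of_forall fun ω => ?_)
      ring
    rw [step3, hlayer _ hrH, hθ]
    refine Finset.sum_congr rfl fun x _ => ?_
    rw [hconst r H x, hQx H x, hr x]
    field_simp [Qne x]
  refine ⟨hmean, ?_⟩
  ------------------------------------------------------------------
  -- the variance
  ------------------------------------------------------------------
  -- Δ is in L²
  have hΔm : Measurable Δ := by
    have : Δ = fun ω => r (X ω) * (G ω + (H ω - G ω) * ξ ω * (π (X ω))⁻¹) := by
      funext ω; rw [hΔ ω]; ring
    rw [this]
    exact ((measurable_of_countable r).comp hX).mul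
      (hGm.add (((hHm.sub hGm).mul hξm).mul
        ((measurable_of_countable fun x => (π x)⁻¹).comp hX)))
  have hΔ2 : MemLp Δ 2 μ := by
    set Rb := ∑ x, |r x| with hRbdef
    set Pb := ∑ x, 1 / π x with hPbdef
    have hRb : ∀ x, |r x| ≤ Rb := fun x =>
      Finset.single_le_sum (f := fun x => |r x|) (fun i _ => abs_nonneg _) (Finset.mem_univ x)
    have hPb0 : ∀ x, (0:ℝ) ≤ 1 / π x := fun x => le_of_lt (div_pos one_pos (πpos x))
    have hPb : ∀ x, 1 / π x ≤ Pb := fun x =>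
      Finset.single_le_sum (f := fun x => 1 / π x)
        (fun i _ => hPb0 i) (Finset.mem_univ x)
    refine MemLp.of_le_mul (c := Rb * (1 + Pb)) (hG.norm.add hH.norm)
      hΔm.aestronglyMeasurable
      (Filter.Eventually.of_forall fun ω => ?_)
    have hb1 : |ξ ω| ≤ 1 := by simpa [Real.norm_eq_abs] using hξb ω
    have hb2 : 1 / π (X ω) ≤ Pb := hPb (X ω)
    have hb3 : |r (X ω)| ≤ Rb := hRb (X ω)
    have hπ0 : 0 < π (X ω) := πpos (X ω)
    have hn : ‖((fun ω => ‖G ω‖) + fun ω => ‖H ω‖) ω‖ = |G ω| + |H ω| := by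
      have h0 : (0:ℝ) ≤ ‖G ω‖ + ‖H ω‖ := add_nonneg (norm_nonneg _) (norm_nonneg _)
      rw [Pi.add_apply, Real.norm_eq_abs, abs_of_nonneg h0, Real.norm_eq_abs,
        Real.norm_eq_abs]
    rw [hΔ ω, Real.norm_eq_abs, hn, abs_mul]
    have hGH : |G ω + (H ω - G ω) * ξ ω / π (X ω)| ≤ (1 + Pb) * (|G ω| + |H ω|) := by
      have e1 : |(H ω - G ω) * ξ ω / π (X ω)|
          = |H ω - G ω| * |ξ ω| * (1 / π (X ω)) := by
        rw [abs_div, abs_mul, abs_of_pos hπ0]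
        ring
      have e2 : |(H ω - G ω) * ξ ω / π (X ω)| ≤ |H ω - G ω| * Pb := by
        rw [e1]
        have h1 : |H ω - G ω| * |ξ ω| ≤ |H ω - G ω| :=
          mul_le_of_le_one_right (abs_nonneg _) hb1
        calc |H ω - G ω| * |ξ ω| * (1 / π (X ω))
            ≤ |H ω - G ω| * (1 / π (X ω)) :=
              mul_le_mul_of_nonneg_right h1 (hPb0 (X ω))
          _ ≤ |H ω - G ω| * Pb := mul_le_mul_of_nonneg_left hb2 (abs_nonneg _)
      have e3 : |H ω - G ω| ≤ |G ω| + |H ω| := by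
        calc |H ω - G ω| ≤ |H ω| + |G ω| := abs_sub _ _
          _ = |G ω| + |H ω| := by ring
      have e4 : |H ω - G ω| * Pb ≤ (|G ω| + |H ω|) * Pb :=
        mul_le_mul_of_nonneg_right e3 (le_trans (hPb0 (X ω)) hb2)
      calc |G ω + (H ω - G ω) * ξ ω / π (X ω)|
          ≤ |G ω| + |(H ω - G ω) * ξ ω / π (X ω)| := abs_add_le _ _
        _ ≤ |G ω| + |H ω - G ω| * Pb := by linarith
        _ ≤ (1 + Pb) * (|G ω| + |H ω|) := by nlinarith [abs_nonneg (H ω)]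
    calc |r (X ω)| * |G ω + (H ω - G ω) * ξ ω / π (X ω)|
        ≤ Rb * ((1 + Pb) * (|G ω| + |H ω|)) :=
          mul_le_mul hb3 hGH (abs_nonneg _) (le_trans (abs_nonneg _) hb3)
      _ = Rb * (1 + Pb) * (|G ω| + |H ω|) := by ring
  -- second moment decomposition
  set φ₂ : Ω → ℝ := fun ω =>
      (2 * r (X ω) ^ 2 / π (X ω)) * (G ω * (H ω - G ω))
      + (r (X ω) ^ 2 / π (X ω) ^ 2) * (H ω - G ω) ^ 2 with hφ₂def
  have hφ₂i : Integrable φ₂ μ :=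
    (hbdd (fun x => 2 * r x ^ 2 / π x) _ (hmul2 G (fun ω => H ω - G ω) hG (hH.sub hG))).add
      (hbdd (fun x => r x ^ 2 / π x ^ 2) _ (hH.sub hG).integrable_sq)
  have hφ₂m : Measurable[MeasurableSpace.comap (fun ω => (X ω, G ω, H ω)) inferInstance] φ₂ := by
    refine Measurable.add ?_ ?_
    · exact ((measurable_of_countable fun x => 2 * r x ^ 2 / π x).comp hXm).mul
        (hGm'.mul (hHm'.sub hGm'))
    · exact ((measurable_of_countable fun x => r x ^ 2 / π x ^ 2).comp hXm).mul
        ((hHm'.sub hGm').pow_const 2)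
  have hsq : ∀ ω, Δ ω ^ 2 = r (X ω) ^ 2 * G ω ^ 2 + φ₂ ω * ξ ω := by
    intro ω
    rw [hΔ ω]
    simp only [hφ₂def]
    have := πne (X ω)
    rcases hξ01 ω with h0 | h0 <;> rw [h0] <;> field_simp <;> ring
  have hrG2 : Integrable (fun ω => r (X ω) ^ 2 * G ω ^ 2) μ :=
    hbdd (fun x => r x ^ 2) _ hG.integrable_sq
  -- the function appearing in the second moment
  set ψ : Ω → ℝ := fun ω =>
      (r (X ω) ^ 2) * (H ω ^ 2) + (r (X ω) ^ 2 * (1 / π (X ω) - 1)) * (H ω - G ω) ^ 2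
      with hψdef
  have hψi : Integrable ψ μ :=
    (hbdd (fun x => r x ^ 2) _ hH.integrable_sq).add
      (hbdd (fun x => r x ^ 2 * (1 / π x - 1)) _ (hH.sub hG).integrable_sq)
  have hsecond : ∫ ω, Δ ω ^ 2 ∂μ = ∫ ω, ψ ω ∂μ := by
    have step1 : ∫ ω, Δ ω ^ 2 ∂μ
        = (∫ ω, r (X ω) ^ 2 * G ω ^ 2 ∂μ) + ∫ ω, φ₂ ω * ξ ω ∂μ := by
      rw [← integral_add hrG2 (hmulξ φ₂ hφ₂i)]
      exact integral_congr_ae (Filter.Eventually.of_forall fun ω => hsq ω)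
    have step2 : ∫ ω, φ₂ ω * ξ ω ∂μ
        = ∫ ω, (2 * r (X ω) ^ 2) * (G ω * (H ω - G ω))
            + (r (X ω) ^ 2 / π (X ω)) * (H ω - G ω) ^ 2 ∂μ := by
      rw [hsub φ₂ hφ₂m hφ₂i]
      refine integral_congr_ae (Filter.Eventually.of_forall fun ω => ?_)
      simp only [hφ₂def]
      have := πne (X ω)
      field_simp
    have hint2 : Integrable (fun ω => (2 * r (X ω) ^ 2) * (G ω * (H ω - G ω))
        + (r (X ω) ^ 2 / π (X ω)) * (H ω - G ω) ^ 2) μ :=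
      (hbdd (fun x => 2 * r x ^ 2) _ (hmul2 G (fun ω => H ω - G ω) hG (hH.sub hG))).add
        (hbdd (fun x => r x ^ 2 / π x) _ (hH.sub hG).integrable_sq)
    rw [step1, step2, ← integral_add hrG2 hint2]
    refine integral_congr_ae (Filter.Eventually.of_forall fun ω => ?_)
    simp only [hψdef]
    have := πne (X ω)
    field_simp
    ring
  have hsum : ∫ ω, ψ ω ∂μ = ∑ x, P x * r x *
      condM (fun ω => (H ω) ^ 2 + (1 / π x - 1) * (H ω - G ω) ^ 2) x := by
    rw [hlayer ψ hψi]
    refine Finset.sum_congr rfl fun x _ => ?_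
    have hset : ∫ ω in X ⁻¹' {x}, ψ ω ∂μ
        = ∫ ω in X ⁻¹' {x},
            r x ^ 2 * ((H ω) ^ 2 + (1 / π x - 1) * (H ω - G ω) ^ 2) ∂μ := by
      refine setIntegral_congr_fun (hpre x) fun ω hω => ?_
      have hωx : X ω = x := hω
      simp only [hψdef, hωx]
      ring
    rw [hset, integral_const_mul, hQx _ x]
    have hP : P x = r x * Q x := by rw [hr x, div_mul_cancel₀ _ (Qne x)]
    rw [hP]
    ring
  rw [variance_eq_sub hΔ2]
  have : μ[Δ ^ 2] = ∫ ω, Δ ω ^ 2 ∂μ := by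
    refine integral_congr_ae (Filter.Eventually.of_forall fun ω => ?_)
    simp [Pi.pow_apply]
  rw [this, hsecond, hsum, hmean]
end
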